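/- arXiv:2012.06067 — 10 statements merged into one kernel-verified Lean document; each statement's English description precedes it below -/
import Mathlib

section
/- Let (A, C, B) be a recollement of abelian categories. If C is an object of C such that i^!(j_!(j^*(C))) = 0, then the counit map ε_C : j_! j^*(C) → C is a monomorphism. -/
/-!
Since `j_!` is fully faithful, `j^* ε_C` is invertible; the right adjoint `j^*` preserves
kernels, so it kills `ker ε_C`, which is therefore of the form `i_* A`. By the adjunction
`i_* ⊣ i^!`, the inclusion `i_* A → j_! j^* C` corresponds to a map `A → i^! j_! j^* C = 0`,
so it vanishes.
-/

open CategoryTheory CategoryTheory.Limits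

universe v₁ v₂ v₃ u₁ u₂ u₃

/-- A recollement of abelian categories `(𝒜, 𝒞, ℬ)`, consisting of additive functors
`i_* : 𝒜 ⥤ 𝒞`, `i^*, i^! : 𝒞 ⥤ 𝒜`, `j^* : 𝒞 ⥤ ℬ`, `j_!, j_* : ℬ ⥤ 𝒞` with adjoint pairs
`(i^*, i_*)`, `(i_*, i^!)`, `(j_!, j^*)`, `(j^*, j_*)`, with `i_*`, `j_!`, `j_*` fully faithful
and the essential image of `i_*` equal to the kernel of `j^*`. -/
structure Recollement (𝒜 : Type u₁) (𝒞 : Type u₂) (ℬ : Type u₃)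
    [Category.{v₁} 𝒜] [Category.{v₂} 𝒞] [Category.{v₃} ℬ]
    [Abelian 𝒜] [Abelian 𝒞] [Abelian ℬ] where
  /-- the functor `i^* : 𝒞 ⥤ 𝒜` -/
  iStar : 𝒞 ⥤ 𝒜
  /-- the functor `i_* : 𝒜 ⥤ 𝒞` -/
  iIns : 𝒜 ⥤ 𝒞
  /-- the functor `i^! : 𝒞 ⥤ 𝒜` -/
  iShriek : 𝒞 ⥤ 𝒜
  /-- the functor `j_! : ℬ ⥤ 𝒞` -/
  jShriek : ℬ ⥤ 𝒞
  /-- the functor `j^* : 𝒞 ⥤ ℬ` -/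
  jStar : 𝒞 ⥤ ℬ
  /-- the functor `j_* : ℬ ⥤ 𝒞` -/
  jIns : ℬ ⥤ 𝒞
  iStar_additive : iStar.Additive
  iIns_additive : iIns.Additive
  iShriek_additive : iShriek.Additive
  jShriek_additive : jShriek.Additive
  jStar_additive : jStar.Additive
  jIns_additive : jIns.Additive
  /-- the adjunction `i^* ⊣ i_*` -/
  adj₁ : iStar ⊣ iIns
  /-- the adjunction `i_* ⊣ i^!` -/
  adj₂ : iIns ⊣ iShriek
  /-- the adjunction `j_! ⊣ j^*` -/
  adj₃ : jShriek ⊣ jStar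
  /-- the adjunction `j^* ⊣ j_*` -/
  adj₄ : jStar ⊣ jIns
  iIns_full : iIns.Full
  iIns_faithful : iIns.Faithful
  jShriek_full : jShriek.Full
  jShriek_faithful : jShriek.Faithful
  jIns_full : jIns.Full
  jIns_faithful : jIns.Faithful
  /-- `im i_* = ker j^*` -/
  im_eq_ker : ∀ X : 𝒞, IsZero (jStar.obj X) ↔ ∃ A₀ : 𝒜, Nonempty (iIns.obj A₀ ≅ X)

variable {𝒜 : Type u₁} {𝒞 : Type u₂} {ℬ : Type u₃}
  [Category.{v₁} 𝒜] [Category.{v₂} 𝒞] [Category.{v₃} ℬ]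
  [Abelian 𝒜] [Abelian 𝒞] [Abelian ℬ]

/-- `0 ⟶ X ⟶ Y ⟶ Z ⟶ 0` is a short exact sequence. -/
def IsSES {𝒟 : Type*} [Category 𝒟] [Abelian 𝒟] {X Y Z : 𝒟}
    (f : X ⟶ Y) (g : Y ⟶ Z) : Prop :=
  ∃ w : f ≫ g = 0, (ShortComplex.mk f g w).ShortExact

namespace CategoryTheory

lemma Adjunction.eq_of_isZero_right_obj {C D : Type*} [Category C] [Category D]
    {F : C ⥤ D} {G : D ⥤ C} (adj : F ⊣ G) {A : C} {Y : D} (hY : IsZero (G.obj Y))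
    (f g : F.obj A ⟶ Y) : f = g :=
  (adj.homEquiv A Y).injective (hY.eq_of_tgt _ _)

lemma Functor.isZero_obj_kernel_of_isIso_map {C D : Type*} [Category C] [Category D]
    [HasZeroMorphisms C] [HasZeroMorphisms D] (G : C ⥤ D) [G.PreservesZeroMorphisms]
    {X Y : C} (f : X ⟶ Y) [HasKernel f] [HasKernel (G.map f)]
    [PreservesLimit (parallelPair f 0) G] [IsIso (G.map f)] :
    IsZero (G.obj (Limits.kernel f)) :=
  (isZero_kernel_of_mono (G.map f)).of_iso (PreservesKernel.iso G f)

end CategoryTheory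

namespace Recollement

variable (R : Recollement 𝒜 𝒞 ℬ)

lemma isIso_jStar_map_counit (X : 𝒞) : IsIso (R.jStar.map (R.adj₃.counit.app X)) := by
  have := R.jShriek_full
  have := R.jShriek_faithful
  infer_instance

lemma exists_iIns_iso_kernel_of_isIso_jStar_map {X Y : 𝒞} (f : X ⟶ Y)
    [IsIso (R.jStar.map f)] : ∃ A : 𝒜, Nonempty (R.iIns.obj A ≅ kernel f) := by
  have := R.adj₃.rightAdjoint_preservesLimits
  exact (R.im_eq_ker _).mp (R.jStar.isZero_obj_kernel_of_isIso_map f)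

lemma mono_of_isIso_jStar_map {X Y : 𝒞} (f : X ⟶ Y) [IsIso (R.jStar.map f)]
    (hX : IsZero (R.iShriek.obj X)) : Mono f := by
  obtain ⟨A, ⟨e⟩⟩ := R.exists_iIns_iso_kernel_of_isIso_jStar_map f
  refine Abelian.mono_of_kernel_ι_eq_zero f ?_
  rw [← cancel_epi e.hom, comp_zero]
  exact R.adj₂.eq_of_isZero_right_obj hX _ _

end Recollement

/-- If `C` is an object of `𝒞` such that `i^!(j_!(j^*(C))) = 0`, then the counit map
`ε_C : j_! j^*(C) → C` is a monomorphism. -/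
theorem stmt_1 (R : Recollement 𝒜 𝒞 ℬ) (X : 𝒞)
    (h : IsZero (R.iShriek.obj (R.jShriek.obj (R.jStar.obj X)))) :
    Mono (R.adj₃.counit.app X) :=
  have := R.isIso_jStar_map_counit X
  R.mono_of_isIso_jStar_map _ h
end

section
/- Let (A, C, B) be a recollement of abelian categories and let 0 → M₁ → M₂ → M₃ → 0 be a short exact sequence in C. If the unit map η_{M_i} : M_i → j_* j^*(M_i) is an epimorphism for i = 1, 2, 3, then the induced sequence 0 → i^!(M₁) → i^!(M₂) → i^!(M₃) → 0 is exact in A. -/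
open CategoryTheory CategoryTheory.Limits

universe v₁ v₂ v₃ u₁ u₂ u₃

variable {𝒜 : Type u₁} {𝒞 : Type u₂} {ℬ : Type u₃}
  [Category.{v₁} 𝒜] [Category.{v₂} 𝒞] [Category.{v₃} ℬ]
  [Abelian 𝒜] [Abelian 𝒞] [Abelian ℬ]

namespace Recollement

variable (R : Recollement 𝒜 𝒞 ℬ)

lemma isZero_jStar_iIns (A : 𝒜) : IsZero (R.jStar.obj (R.iIns.obj A)) :=
  (R.im_eq_ker _).2 ⟨A, ⟨Iso.refl _⟩⟩

/-- The composite `i_* i^! M ⟶ M ⟶ j_* j^* M` vanishes. -/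
lemma counit_comp_unit (M : 𝒞) :
    R.adj₂.counit.app M ≫ R.adj₄.unit.app M = 0 := by
  haveI := R.jIns_additive
  have h := R.adj₄.unit.naturality (R.adj₂.counit.app M)
  have hz : R.jStar.map (R.adj₂.counit.app M) = 0 :=
    (R.isZero_jStar_iIns (R.iShriek.obj M)).eq_of_src _ _
  rw [Functor.id_map] at h
  dsimp only [Functor.id_obj, Functor.comp_obj] at h ⊢
  rw [h, Functor.comp_map, hz, Functor.map_zero, comp_zero]

/-- The counit `i_* i^! M ⟶ M` is a monomorphism. -/
lemma mono_counit (M : 𝒞) : Mono (R.adj₂.counit.app M) := by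
  haveI := R.iIns_full
  haveI := R.iIns_additive
  haveI := R.iShriek_additive
  haveI : PreservesLimitsOfSize.{0, 0} R.jStar := R.adj₃.rightAdjoint_preservesLimits
  have hq : kernel.ι (R.adj₂.counit.app M) = 0 := by
    have h0 : R.jStar.map (kernel.ι (R.adj₂.counit.app M)) = 0 :=
      (R.isZero_jStar_iIns (R.iShriek.obj M)).eq_of_tgt _ _
    have hz : IsZero (R.jStar.obj (kernel (R.adj₂.counit.app M))) :=
      IsZero.of_mono_eq_zero _ h0
    obtain ⟨B, ⟨e⟩⟩ := (R.im_eq_ker _).1 hz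
    have hb : R.iIns.map (R.iIns.preimage (e.hom ≫ kernel.ι (R.adj₂.counit.app M)))
        = e.hom ≫ kernel.ι (R.adj₂.counit.app M) := R.iIns.map_preimage _
    have hs : (R.adj₂.homEquiv B M).symm
        (R.iIns.preimage (e.hom ≫ kernel.ι (R.adj₂.counit.app M))) = 0 := by
      rw [Adjunction.homEquiv_counit, hb, Category.assoc, kernel.condition, comp_zero]
    have hb0 : R.iIns.preimage (e.hom ≫ kernel.ι (R.adj₂.counit.app M)) = 0 := by
      have h' := congrArg (R.adj₂.homEquiv B M) hs
      rw [Equiv.apply_symm_apply] at h'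
      rw [h', Adjunction.homEquiv_unit, Functor.map_zero, comp_zero]
    have : e.hom ≫ kernel.ι (R.adj₂.counit.app M) = 0 := by
      rw [← hb, hb0, Functor.map_zero]
    calc kernel.ι (R.adj₂.counit.app M)
        = e.inv ≫ e.hom ≫ kernel.ι (R.adj₂.counit.app M) := by rw [Iso.inv_hom_id_assoc]
      _ = 0 := by rw [this, comp_zero]
  refine Preadditive.mono_of_cancel_zero _ (fun {P} t ht => ?_)
  rw [← kernel.lift_ι (R.adj₂.counit.app M) t ht, hq, comp_zero]

/-- The short complex `i_* i^! M ⟶ M ⟶ j_* j^* M` is exact. -/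
lemma counit_exact (M : 𝒞) :
    (ShortComplex.mk (R.adj₂.counit.app M) (R.adj₄.unit.app M)
      (R.counit_comp_unit M)).Exact := by
  haveI := R.mono_counit M
  haveI := R.iShriek_additive
  haveI : PreservesLimitsOfSize.{0, 0} R.jStar := R.adj₃.rightAdjoint_preservesLimits
  have hsm : Mono (R.jStar.map (R.adj₄.unit.app M)) := by
    have : IsSplitMono (R.jStar.map (R.adj₄.unit.app M)) :=
      ⟨⟨⟨R.adj₄.counit.app (R.jStar.obj M), R.adj₄.left_triangle_components M⟩⟩⟩
    infer_instance
  have hk0 : R.jStar.map (kernel.ι (R.adj₄.unit.app M)) = 0 := by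
    rw [← cancel_mono (R.jStar.map (R.adj₄.unit.app M)), ← Functor.map_comp,
      kernel.condition, Functor.map_zero, zero_comp]
  have hz : IsZero (R.jStar.obj (kernel (R.adj₄.unit.app M))) :=
    IsZero.of_mono_eq_zero _ hk0
  obtain ⟨A₀, ⟨e⟩⟩ := (R.im_eq_ker _).1 hz
  have ha : R.iIns.map (R.adj₂.homEquiv A₀ M (e.hom ≫ kernel.ι (R.adj₄.unit.app M)))
      ≫ R.adj₂.counit.app M = e.hom ≫ kernel.ι (R.adj₄.unit.app M) := by
    have h' := (R.adj₂.homEquiv A₀ M).symm_apply_apply (e.hom ≫ kernel.ι (R.adj₄.unit.app M))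
    rw [Adjunction.homEquiv_counit] at h'
    exact h'
  refine ShortComplex.exact_of_f_is_kernel _ (KernelFork.IsLimit.ofι' _ _
    (fun {T} t ht => ?_))
  refine ⟨kernel.lift _ t ht ≫ e.inv ≫
    R.iIns.map (R.adj₂.homEquiv A₀ M (e.hom ≫ kernel.ι (R.adj₄.unit.app M))), ?_⟩
  rw [Category.assoc, Category.assoc, ha, Iso.inv_hom_id_assoc, kernel.lift_ι]

end Recollement

open CategoryTheory.Abelian.Pseudoelement

attribute [local instance] CategoryTheory.Abelian.Pseudoelement.objectToSort
  CategoryTheory.Abelian.Pseudoelement.homToFun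

/-- If `0 → M₁ → M₂ → M₃ → 0` is a short exact sequence in `𝒞` and the unit map
`η_{Mᵢ} : Mᵢ → j_* j^*(Mᵢ)` is an epimorphism for `i = 1, 2, 3`, then
`0 → i^!(M₁) → i^!(M₂) → i^!(M₃) → 0` is exact in `𝒜`. -/
theorem stmt_2 (R : Recollement 𝒜 𝒞 ℬ) {M₁ M₂ M₃ : 𝒞} (f : M₁ ⟶ M₂) (g : M₂ ⟶ M₃)
    (hfg : IsSES f g)
    (h₁ : Epi (R.adj₄.unit.app M₁)) (h₂ : Epi (R.adj₄.unit.app M₂))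
    (h₃ : Epi (R.adj₄.unit.app M₃)) :
    IsSES (R.iShriek.map f) (R.iShriek.map g) := by
  obtain ⟨w, hS⟩ := hfg
  haveI := hS.mono_f
  haveI := hS.epi_g
  haveI := h₁
  haveI := R.iIns_faithful
  haveI := R.iIns_additive
  haveI := R.iShriek_additive
  haveI := R.jIns_additive
  haveI := R.jStar_additive
  haveI : PreservesLimitsOfSize.{0, 0} R.iShriek := R.adj₂.rightAdjoint_preservesLimits
  haveI : PreservesLimitsOfSize.{0, 0} R.jStar := R.adj₃.rightAdjoint_preservesLimits
  haveI : PreservesLimitsOfSize.{0, 0} R.jIns := R.adj₄.rightAdjoint_preservesLimits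
  have w' : R.iShriek.map f ≫ R.iShriek.map g = 0 := by
    rw [← Functor.map_comp, w, Functor.map_zero]
  -- `f` is a kernel of `g`
  have hfk : IsLimit (KernelFork.ofι f w) := hS.exact.fIsKernel
  -- `i^!` preserves this kernel
  have hker : IsLimit (KernelFork.ofι (R.iShriek.map f) w') := by
    have := isLimitForkMapOfIsLimit' R.iShriek w hfk
    exact this
  have hmono : Mono (R.iShriek.map f) := mono_of_isLimit_fork hker
  have hex : (ShortComplex.mk (R.iShriek.map f) (R.iShriek.map g) w').Exact :=
    ShortComplex.exact_of_f_is_kernel _ hker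
  -- the `j_* j^*` row is left exact
  have wN : R.jIns.map (R.jStar.map f) ≫ R.jIns.map (R.jStar.map g) = 0 := by
    rw [← Functor.map_comp, ← Functor.map_comp, w, Functor.map_zero, Functor.map_zero]
  have hNker : IsLimit (KernelFork.ofι (R.jIns.map (R.jStar.map f)) wN) := by
    have := isLimitForkMapOfIsLimit' (R.jStar ⋙ R.jIns) w hfk
    exact this
  have hNex : (ShortComplex.mk (R.jIns.map (R.jStar.map f))
      (R.jIns.map (R.jStar.map g)) wN).Exact :=
    ShortComplex.exact_of_f_is_kernel _ hNker
  -- naturality equations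
  have natf : f ≫ R.adj₄.unit.app M₂ = R.adj₄.unit.app M₁ ≫ R.jIns.map (R.jStar.map f) := by
    simpa using R.adj₄.unit.naturality f
  have natg : R.adj₄.unit.app M₂ ≫ R.jIns.map (R.jStar.map g) = g ≫ R.adj₄.unit.app M₃ := by
    simpa using (R.adj₄.unit.naturality g).symm
  have natε : R.iIns.map (R.iShriek.map g) ≫ R.adj₂.counit.app M₃
      = R.adj₂.counit.app M₂ ≫ g := by
    simpa using R.adj₂.counit.naturality g
  -- pseudoelement chase: `i_* i^!(g)` is an epimorphism
  haveI := R.mono_counit M₃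
  have hepiK : Epi (R.iIns.map (R.iShriek.map g)) := by
    apply Abelian.Pseudoelement.epi_of_pseudo_surjective
    intro c
    obtain ⟨x₂, hx₂⟩ := Abelian.Pseudoelement.pseudo_surjective_of_epi g (R.adj₂.counit.app M₃ c)
    have h1 : R.adj₄.unit.app M₃ (R.adj₂.counit.app M₃ c) = 0 := by
      rw [← Abelian.Pseudoelement.comp_apply, R.counit_comp_unit, Abelian.Pseudoelement.zero_apply]
    have h2 : R.jIns.map (R.jStar.map g) (R.adj₄.unit.app M₂ x₂) = 0 := by
      rw [← Abelian.Pseudoelement.comp_apply, natg, Abelian.Pseudoelement.comp_apply, hx₂, h1]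
    obtain ⟨y, hy⟩ := Abelian.Pseudoelement.pseudo_exact_of_exact hNex (R.adj₄.unit.app M₂ x₂) h2
    obtain ⟨x₁, hx₁⟩ := Abelian.Pseudoelement.pseudo_surjective_of_epi (R.adj₄.unit.app M₁) y
    have h3 : R.adj₄.unit.app M₂ (f x₁) = R.adj₄.unit.app M₂ x₂ := by
      rw [← Abelian.Pseudoelement.comp_apply, natf, Abelian.Pseudoelement.comp_apply, hx₁, hy]
    obtain ⟨z, hz0, hzp⟩ := Abelian.Pseudoelement.sub_of_eq_image (R.adj₄.unit.app M₂) x₂ (f x₁) h3.symm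
    have hgf : g (f x₁) = 0 := by rw [← Abelian.Pseudoelement.comp_apply, w, Abelian.Pseudoelement.zero_apply]
    have h4 : g z = R.adj₂.counit.app M₃ c := by rw [hzp _ g hgf, hx₂]
    obtain ⟨u, hu⟩ := Abelian.Pseudoelement.pseudo_exact_of_exact (R.counit_exact M₂) z hz0
    refine ⟨u, Abelian.Pseudoelement.pseudo_injective_of_mono (R.adj₂.counit.app M₃) ?_⟩
    rw [← Abelian.Pseudoelement.comp_apply, natε, Abelian.Pseudoelement.comp_apply, hu, h4]
  have hepi : Epi (R.iShriek.map g) := R.iIns.epi_of_epi_map hepiK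
  exact ⟨w', { exact := hex, mono_f := hmono, epi_g := hepi }⟩
end

section
/- Let (A, C, B) be a recollement of abelian categories and let 0 → M₁ → M₂ → M₃ → 0 be a short exact sequence in C. If the counit map ε_{M_i} : j_! j^*(M_i) → M_i is a monomorphism for i = 1, 2, 3, then the induced sequence 0 → i^*(M₁) → i^*(M₂) → i^*(M₃) → 0 is exact in A. -/
/-
Compare `0 → M₁ → M₂ → M₃ → 0` with its images under `j_! j^*` and `i_* i^*` via the counit `ε`
and the unit `η`. The row `j_! j^* M•` is exact with epi on the right, and each column
`0 → j_! j^* Mᵢ → Mᵢ → i_* i^* Mᵢ → 0` is short exact: `ε` is mono by hypothesis and `η` is always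
a cokernel of `ε`. The snake lemma, whose kernel row vanishes, makes the row `i_* i^* M•` short
exact, and the exact faithful functor `i_*` reflects this to `i^* M•`.
-/

open CategoryTheory CategoryTheory.Limits

universe v₁ v₂ v₃ u₁ u₂ u₃

variable {𝒜 : Type u₁} {𝒞 : Type u₂} {ℬ : Type u₃}
  [Category.{v₁} 𝒜] [Category.{v₂} 𝒞] [Category.{v₃} ℬ]
  [Abelian 𝒜] [Abelian 𝒞] [Abelian ℬ]

namespace CategoryTheory.ShortComplex

open ZeroObject

variable {𝒟 : Type*} [Category 𝒟] [Abelian 𝒟]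

theorem shortExact_of_isColimit_cokernelCofork {L₁ L₂ L₃ : ShortComplex 𝒟} (v₁₂ : L₁ ⟶ L₂)
    (v₂₃ : L₂ ⟶ L₃) (w : v₁₂ ≫ v₂₃ = 0) [Mono v₁₂] (hv₂₃ : IsColimit (CokernelCofork.ofπ v₂₃ w))
    (hL₁ : L₁.Exact) [Epi L₁.g] (hL₂ : L₂.ShortExact) : L₃.ShortExact := by
  have := hL₂.mono_f
  have := hL₂.epi_g
  let D : SnakeInput 𝒟 :=
    { L₀ := 0, L₁, L₂, L₃, v₀₁ := 0, v₁₂, v₂₃, w₁₃ := w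
      h₀ := zeroKernelOfCancelZero v₁₂ fun _ _ hq => zero_of_comp_mono _ hq
      h₃ := hv₂₃
      L₁_exact := hL₁
      epi_L₁_g := inferInstance
      L₂_exact := hL₂.exact
      mono_L₂_f := inferInstance }
  -- the snake's connecting map starts at the zero row
  have hδ : D.δ = 0 := (ShortComplex.π₃.map_isZero (isZero_zero _)).eq_of_src _ _
  exact { exact := D.L₃_exact, mono_f := D.L₂'_exact.mono_g hδ, epi_g := D.epi_L₃_g }

lemma mono_of_mono_τ {L₁ L₂ : ShortComplex 𝒟} (φ : L₁ ⟶ L₂) (h₁ : Mono φ.τ₁)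
    (h₂ : Mono φ.τ₂) (h₃ : Mono φ.τ₃) : Mono φ :=
  ⟨fun a b h => by
    ext
    · rw [← cancel_mono φ.τ₁, ← comp_τ₁, h, comp_τ₁]
    · rw [← cancel_mono φ.τ₂, ← comp_τ₂, h, comp_τ₂]
    · rw [← cancel_mono φ.τ₃, ← comp_τ₃, h, comp_τ₃]⟩

lemma ShortExact.of_map {𝒟' : Type*} [Category 𝒟'] [Abelian 𝒟'] {S : ShortComplex 𝒟}
    (F : 𝒟 ⥤ 𝒟') [F.PreservesZeroMorphisms] [F.PreservesLeftHomologyOf S]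
    [F.PreservesRightHomologyOf S] [F.Faithful] (h : (S.map F).ShortExact) : S.ShortExact :=
  have := h.mono_f
  have := h.epi_g
  { exact := (S.exact_map_iff_of_faithful F).1 h.exact
    mono_f := F.mono_of_mono_map ‹_›
    epi_g := F.epi_of_epi_map ‹_› }

end CategoryTheory.ShortComplex

namespace Recollement

attribute [instance] iIns_full iIns_faithful

variable (R : Recollement 𝒜 𝒞 ℬ)

instance : R.iStar.IsLeftAdjoint := R.adj₁.isLeftAdjoint
instance : R.iIns.IsLeftAdjoint := R.adj₂.isLeftAdjoint
instance : R.iIns.IsRightAdjoint := R.adj₁.isRightAdjoint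
instance : R.jShriek.IsLeftAdjoint := R.adj₃.isLeftAdjoint
instance : R.jStar.IsLeftAdjoint := R.adj₄.isLeftAdjoint
instance : R.jStar.IsRightAdjoint := R.adj₃.isRightAdjoint

lemma hom_jShriek_iIns_eq_zero {B : ℬ} {A : 𝒜} (φ : R.jShriek.obj B ⟶ R.iIns.obj A) :
    φ = 0 :=
  (R.adj₃.homEquiv _ _).injective ((R.im_eq_ker _).2 ⟨A, ⟨Iso.refl _⟩⟩ |>.eq_of_tgt _ _)

lemma counit_comp_unit_s3 (M : 𝒞) : R.adj₃.counit.app M ≫ R.adj₁.unit.app M = 0 :=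
  R.hom_jShriek_iIns_eq_zero _

lemma iStar_map_counit (M : 𝒞) : R.iStar.map (R.adj₃.counit.app M) = 0 :=
  (R.adj₁.homEquiv _ _).injective
    ((R.hom_jShriek_iIns_eq_zero _).trans (R.hom_jShriek_iIns_eq_zero _).symm)

lemma isIso_iStar_map_cokernel_π_counit (M : 𝒞) :
    IsIso (R.iStar.map (cokernel.π (R.adj₃.counit.app M))) :=
  CokernelCofork.IsColimit.isIso_π _
    (CokernelCofork.isColimitMapCoconeEquiv _ _ (isColimitOfPreserves R.iStar
      (cokernelIsCokernel _))) (R.iStar_map_counit M)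

lemma isZero_jStar_obj_cokernel_counit (M : 𝒞) :
    IsZero (R.jStar.obj (cokernel (R.adj₃.counit.app M))) :=
  have : IsSplitEpi (R.jStar.map (R.adj₃.counit.app M)) :=
    ⟨⟨R.adj₃.unit.app _, R.adj₃.right_triangle_components M⟩⟩
  (isZero_cokernel_of_epi _).of_iso (PreservesCokernel.iso R.jStar _)

lemma isIso_unit_app_of_isZero_jStar_obj {X : 𝒞} (h : IsZero (R.jStar.obj X)) :
    IsIso (R.adj₁.unit.app X) :=
  have ⟨_, ⟨e⟩⟩ := (R.im_eq_ker X).1 h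
  R.adj₁.isIso_unit_app_of_iso e.symm

/- `j^*` kills `C := coker ε_M`, so `C` lies in the image of `i_*` and `η_C` is invertible; and
`i^*` inverts `π : M ⟶ C` since `i^* ε_M = 0`. By naturality `η_M = π ≫ η_C ≫ (i_* i^* π)⁻¹`. -/
noncomputable def unitIsCokernel (M : 𝒞) :
    IsColimit (CokernelCofork.ofπ (R.adj₁.unit.app M) (R.counit_comp_unit_s3 M)) := by
  let π := cokernel.π (R.adj₃.counit.app M)
  have := R.isIso_unit_app_of_isZero_jStar_obj (R.isZero_jStar_obj_cokernel_counit M)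
  have := R.isIso_iStar_map_cokernel_π_counit M
  refine IsColimit.ofIsoColimit (cokernelIsCokernel _)
    (Cofork.ext (asIso (R.adj₁.unit.app _ ≫ inv (R.iIns.map (R.iStar.map π)))) ?_)
  simp [π, ← R.adj₁.unit_naturality_assoc]

theorem shortExact_map_iStar {S : ShortComplex 𝒞} (hS : S.ShortExact)
    (h₁ : Mono (R.adj₃.counit.app S.X₁)) (h₂ : Mono (R.adj₃.counit.app S.X₂))
    (h₃ : Mono (R.adj₃.counit.app S.X₃)) : (S.map R.iStar).ShortExact := by
  have := hS.epi_g
  let ε : S.map (R.jStar ⋙ R.jShriek) ⟶ S := S.mapNatTrans R.adj₃.counit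
  let η : S ⟶ S.map (R.iStar ⋙ R.iIns) := S.mapNatTrans R.adj₁.unit
  have : Mono ε := ShortComplex.mono_of_mono_τ ε h₁ h₂ h₃
  have hεη : ε ≫ η = 0 := by ext <;> exact R.counit_comp_unit_s3 _
  have hη : IsColimit (CokernelCofork.ofπ η hεη) := by
    refine ShortComplex.isColimitOfIsColimitπ _ ?_ ?_ ?_ <;>
      exact (CokernelCofork.isColimitMapCoconeEquiv _ _).symm (R.unitIsCokernel _)
  have hL₁ : (S.map (R.jStar ⋙ R.jShriek)).Exact :=
    (hS.exact.map R.jStar).map_of_epi_of_preservesCokernel R.jShriek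
      (R.jStar.map_epi S.g) inferInstance
  have : Epi (S.map (R.jStar ⋙ R.jShriek)).g := (R.jStar ⋙ R.jShriek).map_epi S.g
  exact (ShortComplex.shortExact_of_isColimit_cokernelCofork ε η hεη hη hL₁ hS).of_map R.iIns

end Recollement

/-- If `0 → M₁ → M₂ → M₃ → 0` is a short exact sequence in `𝒞` and the counit map
`ε_{Mᵢ} : j_! j^*(Mᵢ) → Mᵢ` is a monomorphism for `i = 1, 2, 3`, then
`0 → i^*(M₁) → i^*(M₂) → i^*(M₃) → 0` is exact in `𝒜`. -/
theorem stmt_3 (R : Recollement 𝒜 𝒞 ℬ) {M₁ M₂ M₃ : 𝒞} (f : M₁ ⟶ M₂) (g : M₂ ⟶ M₃)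
    (hfg : IsSES f g)
    (h₁ : Mono (R.adj₃.counit.app M₁)) (h₂ : Mono (R.adj₃.counit.app M₂))
    (h₃ : Mono (R.adj₃.counit.app M₃)) :
    IsSES (R.iStar.map f) (R.iStar.map g) := by
  obtain ⟨_, hS⟩ := hfg
  exact ⟨_, R.shortExact_map_iStar hS h₁ h₂ h₃⟩
end

section
/- Let (A, C, B) be a recollement of abelian categories. For any object M of C and any object A of A, one has Ext¹_C(j_! j^*(M), i_*(A)) = 0; i.e., every short exact sequence 0 → i_*(A) → D → j_! j^*(M) → 0 in C splits. -/
open CategoryTheory CategoryTheory.Limits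

universe v₁ v₂ v₃ u₁ u₂ u₃

variable {𝒜 : Type u₁} {𝒞 : Type u₂} {ℬ : Type u₃}
  [Category.{v₁} 𝒜] [Category.{v₂} 𝒞] [Category.{v₃} ℬ]
  [Abelian 𝒜] [Abelian 𝒞] [Abelian ℬ]

/-- For any object `M` of `𝒞` and any object `A` of `𝒜`, one has
`Ext¹_𝒞(j_! j^*(M), i_*(A)) = 0`; i.e., every short exact sequence
`0 → i_*(A) → D → j_! j^*(M) → 0` in `𝒞` splits. -/
theorem stmt_7 (R : Recollement 𝒜 𝒞 ℬ) (M : 𝒞) (A₀ : 𝒜) (D : 𝒞)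
    (f : R.iIns.obj A₀ ⟶ D) (g : D ⟶ R.jShriek.obj (R.jStar.obj M))
    (h : IsSES f g) :
    ∃ s : R.jShriek.obj (R.jStar.obj M) ⟶ D, s ≫ g = 𝟙 _ := by
  obtain ⟨w, hw⟩ := h
  have hadd := R.jStar_additive
  have hPL : PreservesLimits R.jStar := R.adj₃.rightAdjoint_preservesLimits
  have hPC : PreservesColimits R.jStar := R.adj₄.leftAdjoint_preservesColimits
  have hPZ : R.jStar.PreservesZeroMorphisms := by infer_instance
  have hPFL : PreservesFiniteLimits R.jStar := ⟨fun J _ _ => inferInstance⟩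
  have hPFC : PreservesFiniteColimits R.jStar := ⟨fun J _ _ => inferInstance⟩
  have hSE : ((ShortComplex.mk f g w).map R.jStar).ShortExact :=
    hw.map_of_exact R.jStar
  have hz : IsZero (R.jStar.obj (R.iIns.obj A₀)) :=
    (R.im_eq_ker _).2 ⟨A₀, ⟨Iso.refl _⟩⟩
  have hiso : IsIso (R.jStar.map g) := hSE.isIso_g_iff.2 hz
  refine ⟨R.jShriek.map (R.adj₃.unit.app (R.jStar.obj M) ≫ inv (R.jStar.map g)) ≫
      R.adj₃.counit.app D, ?_⟩
  rw [Category.assoc, ← R.adj₃.counit_naturality g,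
    ← Category.assoc, ← R.jShriek.map_comp, Category.assoc, IsIso.inv_hom_id,
    Category.comp_id]
  exact R.adj₃.left_triangle_components _
end

section
/- Let (A, C, B) be a recollement of abelian categories. For any object M of C and any injective object I of A, one has Ext¹_C(i_* i^!(M), i_*(I)) = 0; i.e., every short exact sequence 0 → i_*(I) → H → i_* i^!(M) → 0 in C splits. -/
open CategoryTheory CategoryTheory.Limits

universe v₁ v₂ v₃ u₁ u₂ u₃

variable {𝒜 : Type u₁} {𝒞 : Type u₂} {ℬ : Type u₃}
  [Category.{v₁} 𝒜] [Category.{v₂} 𝒞] [Category.{v₃} ℬ]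
  [Abelian 𝒜] [Abelian 𝒞] [Abelian ℬ]

/-- For any object `M` of `𝒞` and any injective object `I` of `𝒜`, one has
`Ext¹_𝒞(i_* i^!(M), i_*(I)) = 0`; i.e., every short exact sequence
`0 → i_*(I) → H → i_* i^!(M) → 0` in `𝒞` splits. -/
theorem stmt_8 (R : Recollement 𝒜 𝒞 ℬ) (M : 𝒞) (I : 𝒜) (hI : Injective I) (H : 𝒞)
    (f : R.iIns.obj I ⟶ H) (g : H ⟶ R.iIns.obj (R.iShriek.obj M))
    (h : IsSES f g) :
    ∃ s : R.iIns.obj (R.iShriek.obj M) ⟶ H, s ≫ g = 𝟙 _ := by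

  obtain ⟨w, hse⟩ := h
  haveI := R.iIns_full
  haveI := R.iIns_faithful
  haveI := R.jStar_additive
  haveI := hI
  haveI : PreservesFiniteLimits R.jStar :=
    letI := R.adj₃.rightAdjoint_preservesLimits
    inferInstance
  haveI : PreservesFiniteColimits R.jStar :=
    letI := R.adj₄.leftAdjoint_preservesColimits
    inferInstance
  haveI : Mono f := hse.mono_f
  haveI : Epi g := hse.epi_g
  have hmap := hse.map R.jStar
  have hI0 : IsZero (R.jStar.obj (R.iIns.obj I)) :=
    (R.im_eq_ker _).2 ⟨I, ⟨Iso.refl _⟩⟩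
  have hM0 : IsZero (R.jStar.obj (R.iIns.obj (R.iShriek.obj M))) :=
    (R.im_eq_ker _).2 ⟨R.iShriek.obj M, ⟨Iso.refl _⟩⟩
  have hH0 : IsZero (R.jStar.obj H) :=
    hmap.exact.isZero_of_both_zeros (hI0.eq_of_src _ _) (hM0.eq_of_tgt _ _)
  obtain ⟨A₀, ⟨e⟩⟩ := (R.im_eq_ker H).1 hH0
  set f' := R.iIns.preimage (f ≫ e.inv) with hf'def
  have hf' : R.iIns.map f' = f ≫ e.inv := R.iIns.map_preimage _
  haveI : Mono (R.iIns.map f') := by rw [hf']; exact mono_comp _ _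
  haveI : Mono f' := R.iIns.mono_of_mono_map inferInstance
  have hr' : f' ≫ Injective.factorThru (𝟙 I) f' = 𝟙 I := Injective.comp_factorThru _ _
  have hr : f ≫ (e.inv ≫ R.iIns.map (Injective.factorThru (𝟙 I) f')) = 𝟙 _ := by
    rw [← Category.assoc, ← hf', ← R.iIns.map_comp, hr', R.iIns.map_id]
  exact ⟨(ShortComplex.Splitting.ofExactOfRetraction (ShortComplex.mk f g w)
    hse.exact _ hr hse.epi_g).s,
    (ShortComplex.Splitting.ofExactOfRetraction (ShortComplex.mk f g w)
    hse.exact _ hr hse.epi_g).s_g⟩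
end

section
/- Let (A, C, B) be a recollement of abelian categories where A has enough injectives, and let C₁ = {C ∈ C : i^* j_* j^*(C) = 0}, regarded as an extension-closed exact subcategory of C. Let M ∈ C₁. Then Ext¹_C(M, i_*(I)) = 0 for every injective object I of A if and only if the counit ε_M : j_! j^*(M) → M is a monomorphism. -/
open CategoryTheory CategoryTheory.Limits

universe v₁ v₂ v₃ u₁ u₂ u₃

variable {𝒜 : Type u₁} {𝒞 : Type u₂} {ℬ : Type u₃}
  [Category.{v₁} 𝒜] [Category.{v₂} 𝒞] [Category.{v₃} ℬ]
  [Abelian 𝒜] [Abelian 𝒞] [Abelian ℬ]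

/- ====== auxiliary material (everything above `stmt_10`) ====== -/

namespace IsSES

section GenericAbelian

variable {𝒟 : Type*} [Category 𝒟] [Abelian 𝒟]

lemma isZero_of_mono_eq_zero {X Y : 𝒟} (f : X ⟶ Y) [Mono f] (h : f = 0) : IsZero X := by
  rw [IsZero.iff_id_eq_zero, ← cancel_mono f, h, comp_zero, zero_comp]

lemma isZero_of_epi_eq_zero {X Y : 𝒟} (f : X ⟶ Y) [Epi f] (h : f = 0) : IsZero Y := by
  rw [IsZero.iff_id_eq_zero, ← cancel_epi f, h, comp_zero, zero_comp]

lemma isZero_tgt_of_epi {X Y : 𝒟} (f : X ⟶ Y) [Epi f] (h : IsZero X) : IsZero Y :=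
  isZero_of_epi_eq_zero f (h.eq_of_src f 0)

lemma ses_mono {X Y Z : 𝒟} {f : X ⟶ Y} {g : Y ⟶ Z} (h : IsSES f g) : Mono f := h.2.mono_f

lemma ses_epi {X Y Z : 𝒟} {f : X ⟶ Y} {g : Y ⟶ Z} (h : IsSES f g) : Epi g := h.2.epi_g

lemma ses_exact {X Y Z : 𝒟} {f : X ⟶ Y} {g : Y ⟶ Z} (h : IsSES f g) :
    (ShortComplex.mk f g h.1).Exact := h.2.exact

lemma ses_mk {X Y Z : 𝒟} (f : X ⟶ Y) (g : Y ⟶ Z) (w : f ≫ g = 0)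
    (ex : (ShortComplex.mk f g w).Exact) (hf : Mono f) (hg : Epi g) : IsSES f g :=
  ⟨w, ShortComplex.ShortExact.mk' ex hf hg⟩

/-- the middle object of a SES with zero ends is zero -/
lemma ses_isZero_X₂ {X Y Z : 𝒟} {f : X ⟶ Y} {g : Y ⟶ Z} (hS : IsSES f g)
    (h1 : IsZero X) (h3 : IsZero Z) : IsZero Y := by
  haveI := hS.ses_mono
  have hg : g = 0 := h3.eq_of_tgt _ _
  have h0 : 𝟙 Y ≫ (ShortComplex.mk f g hS.1).g = 0 := by
    show 𝟙 Y ≫ g = 0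
    rw [Category.id_comp, hg]
  have hlift := hS.ses_exact.lift_f (𝟙 Y) h0
  rw [IsZero.iff_id_eq_zero, ← hlift]
  have hf : (ShortComplex.mk f g hS.1).f = 0 := h1.eq_of_src _ _
  rw [hf, comp_zero]

/-- from a retraction of `f`, get a section of `g` -/
lemma section_of_retraction {X Y Z : 𝒟} {f : X ⟶ Y} {g : Y ⟶ Z} (hS : IsSES f g)
    {r : Y ⟶ X} (hr : f ≫ r = 𝟙 X) : ∃ s : Z ⟶ Y, s ≫ g = 𝟙 Z := by
  obtain ⟨w, hS⟩ := hS
  haveI := hS.epi_g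
  have hw : (ShortComplex.mk f g w).f ≫ (𝟙 Y - r ≫ f) = 0 := by
    show f ≫ (𝟙 Y - r ≫ f) = 0
    rw [Preadditive.comp_sub, Category.comp_id, ← Category.assoc, hr, Category.id_comp, sub_self]
  refine ⟨hS.exact.desc (𝟙 Y - r ≫ f) hw, ?_⟩
  have hgdesc := hS.exact.g_desc (𝟙 Y - r ≫ f) hw
  rw [← cancel_epi g, ← Category.assoc]
  dsimp only at hgdesc ⊢
  rw [hgdesc, Preadditive.sub_comp, Category.id_comp, Category.assoc, w, comp_zero, sub_zero,
    Category.comp_id]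

/-- from a section of `g`, get a retraction of `f` -/
lemma retraction_of_section {X Y Z : 𝒟} {f : X ⟶ Y} {g : Y ⟶ Z} (hS : IsSES f g)
    {s : Z ⟶ Y} (hs : s ≫ g = 𝟙 Z) : ∃ r : Y ⟶ X, f ≫ r = 𝟙 X := by
  obtain ⟨w, hS⟩ := hS
  haveI := hS.mono_f
  have hw : (𝟙 Y - g ≫ s) ≫ (ShortComplex.mk f g w).g = 0 := by
    show (𝟙 Y - g ≫ s) ≫ g = 0
    rw [Preadditive.sub_comp, Category.id_comp, Category.assoc, hs, Category.comp_id, sub_self]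
  refine ⟨hS.exact.lift (𝟙 Y - g ≫ s) hw, ?_⟩
  have hliftf := hS.exact.lift_f (𝟙 Y - g ≫ s) hw
  rw [← cancel_mono f, Category.assoc]
  dsimp only at hliftf ⊢
  rw [hliftf, Preadditive.comp_sub, Category.comp_id, ← Category.assoc, w, zero_comp, sub_zero,
    Category.id_comp]

/-- pullback of a short exact sequence -/
lemma pullbackSES {X Y Z W : 𝒟} {f : X ⟶ Y} {g : Y ⟶ Z} (hS : IsSES f g) (h : W ⟶ Z)
    (w' : f ≫ g = (0 : X ⟶ W) ≫ h) :
    IsSES (pullback.lift f 0 w') (pullback.snd g h) := by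
  haveI := hS.ses_mono
  haveI := hS.ses_epi
  have hfst : pullback.lift f 0 w' ≫ pullback.fst g h = f := pullback.lift_fst _ _ _
  have hsnd : pullback.lift f 0 w' ≫ pullback.snd g h = 0 := pullback.lift_snd _ _ _
  haveI : Mono (pullback.lift f 0 w') := by
    haveI : Mono (pullback.lift f 0 w' ≫ pullback.fst g h) := by rw [hfst]; infer_instance
    exact mono_of_mono _ (pullback.fst g h)
  refine ses_mk _ _ hsnd ?_ ‹_› inferInstance
  apply ShortComplex.exact_of_f_is_kernel
  apply KernelFork.IsLimit.ofι'
  intro T k hk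
  refine ⟨hS.ses_exact.lift (k ≫ pullback.fst g h)
      (by rw [Category.assoc, pullback.condition, ← Category.assoc, hk, zero_comp]), ?_⟩
  apply pullback.hom_ext
  · simp only [Category.assoc, hfst]
    exact hS.ses_exact.lift_f _ _
  · simp only [Category.assoc, hsnd, comp_zero]
    exact hk.symm

/-- pushout of a short exact sequence -/
lemma pushoutSES {X Y Z W : 𝒟} {f : X ⟶ Y} {g : Y ⟶ Z} (hS : IsSES f g) (h : X ⟶ W)
    (w' : h ≫ (0 : W ⟶ Z) = f ≫ g) :
    IsSES (pushout.inl h f) (pushout.desc 0 g w') := by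
  haveI := hS.ses_mono
  haveI := hS.ses_epi
  have hinl : pushout.inl h f ≫ pushout.desc 0 g w' = 0 := pushout.inl_desc _ _ _
  have hinr : pushout.inr h f ≫ pushout.desc 0 g w' = g := pushout.inr_desc _ _ _
  haveI : Epi (pushout.desc 0 g w') := epi_of_epi_fac hinr
  haveI : Mono (pushout.inl h f) := inferInstance
  refine ses_mk _ _ hinl ?_ ‹_› ‹_›
  apply ShortComplex.exact_of_g_is_cokernel
  apply CokernelCofork.IsColimit.ofπ'
  intro T k hk
  refine ⟨hS.ses_exact.desc (pushout.inr h f ≫ k)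
      (by rw [← Category.assoc, ← pushout.condition, Category.assoc, hk, comp_zero]), ?_⟩
  apply pushout.hom_ext
  · simp only [← Category.assoc, hinl]
    rw [zero_comp, ← hk]
  · simp only [← Category.assoc, hinr]
    exact hS.ses_exact.g_desc _ _

/-- postcomposing the epi of a SES with an isomorphism -/
lemma postcompSES {X Y Z Z' : 𝒟} {f : X ⟶ Y} {g : Y ⟶ Z} (hS : IsSES f g) (h : Z ⟶ Z')
    [IsIso h] : IsSES f (g ≫ h) := by
  have w2 : f ≫ (g ≫ h) = 0 := by rw [← Category.assoc, hS.1, zero_comp]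
  refine ⟨w2, ?_⟩
  refine ShortComplex.shortExact_of_iso (S₁ := ShortComplex.mk f g hS.1)
    (S₂ := ShortComplex.mk f (g ≫ h) w2) ?_ hS.2
  exact ShortComplex.isoMk (Iso.refl _) (Iso.refl _) (asIso h)

/-- the "five lemma": a morphism between SES's with the same ends is an isomorphism -/
lemma isIso_comparison {X Y₁ Y₂ Z : 𝒟} {f₁ : X ⟶ Y₁} {g₁ : Y₁ ⟶ Z} {f₂ : X ⟶ Y₂}
    {g₂ : Y₂ ⟶ Z} (hS₁ : IsSES f₁ g₁) (hS₂ : IsSES f₂ g₂) (φ : Y₁ ⟶ Y₂)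
    (hf : f₁ ≫ φ = f₂) (hg : φ ≫ g₂ = g₁) : IsIso φ := by
  haveI := hS₁.ses_mono; haveI := hS₁.ses_epi; haveI := hS₂.ses_mono; haveI := hS₂.ses_epi
  haveI : Mono φ := by
    apply Preadditive.mono_of_cancel_zero
    intro P x hx
    have hxg : x ≫ g₁ = 0 := by rw [← hg, ← Category.assoc, hx, zero_comp]
    obtain ⟨l, hl⟩ := KernelFork.IsLimit.lift' hS₁.2.fIsKernel x hxg
    have hlf : l ≫ f₁ = x := hl
    have h2 : l ≫ f₂ = 0 := by rw [← hf, ← Category.assoc, hlf, hx]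
    have hl0 : l = 0 := by rwa [← cancel_mono f₂, zero_comp]
    rw [← hlf, hl0, zero_comp]
  haveI : Epi φ := by
    apply Preadditive.epi_of_cancel_zero
    intro P c hc
    have hfc : f₂ ≫ c = 0 := by rw [← hf, Category.assoc, hc, comp_zero]
    obtain ⟨c', hc'⟩ := CokernelCofork.IsColimit.desc' hS₂.2.gIsCokernel c hfc
    have hgc : g₂ ≫ c' = c := hc'
    have h2 : g₁ ≫ c' = 0 := by rw [← hg, Category.assoc, hgc, hc]
    have hc0 : c' = 0 := by rwa [← cancel_epi g₁, comp_zero]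
    rw [← hgc, hc0, comp_zero]
  exact isIso_of_mono_of_epi φ

/-- the image factorization SES `0 → ker h → X → im h → 0` -/
lemma imageSES {X Y : 𝒟} (h : X ⟶ Y) :
    IsSES (kernel.ι h) (Abelian.factorThruImage h) := by
  have w0 : kernel.ι h ≫ Abelian.factorThruImage h = 0 := by
    rw [← cancel_mono (Abelian.image.ι h), Category.assoc, Abelian.image.fac,
      kernel.condition, zero_comp]
  refine ses_mk _ _ w0 ?_ inferInstance inferInstance
  apply ShortComplex.exact_of_f_is_kernel
  apply KernelFork.IsLimit.ofι'
  intro A t ht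
  have ht' : t ≫ h = 0 := by
    have h2 : t ≫ Abelian.factorThruImage h ≫ Abelian.image.ι h = 0 := by
      rw [← Category.assoc, show t ≫ Abelian.factorThruImage h = 0 from ht, zero_comp]
    rwa [Abelian.image.fac] at h2
  exact ⟨kernel.lift h t ht', kernel.lift_ι h t ht'⟩

section PseudoChase

open CategoryTheory.Abelian

attribute [local instance] Pseudoelement.objectToSort Pseudoelement.homToFun

/-- the induced SES `0 → X → D/T → N → 0` from compatible SES's -/
lemma quotSES {X D M T N E : 𝒟} {f : X ⟶ D} {g : D ⟶ M} {t : T ⟶ D} {q : D ⟶ E}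
    {e : T ⟶ M} {p : M ⟶ N} {gbar : E ⟶ N}
    (hfg : IsSES f g) (htq : IsSES t q) (hep : IsSES e p)
    (ht : t ≫ g = e) (hcomm : q ≫ gbar = g ≫ p) :
    IsSES (f ≫ q) gbar := by
  haveI := hfg.ses_mono; haveI := hfg.ses_epi; haveI := htq.ses_mono; haveI := htq.ses_epi
  haveI := hep.ses_mono; haveI := hep.ses_epi
  have w0 : (f ≫ q) ≫ gbar = 0 := by
    rw [Category.assoc, hcomm, ← Category.assoc, hfg.1, zero_comp]
  have hmono : Mono (f ≫ q) := by
    apply Pseudoelement.mono_of_zero_of_map_zero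
    intro a ha
    rw [Pseudoelement.comp_apply] at ha
    obtain ⟨x, hx⟩ := Pseudoelement.pseudo_exact_of_exact htq.ses_exact (f a) ha
    have h1 : e x = 0 := by
      have h2 : g (t x) = g (f a) := by rw [hx]
      rw [← Pseudoelement.comp_apply, ← Pseudoelement.comp_apply, ht, hfg.1] at h2
      rw [h2]
      exact Pseudoelement.zero_apply _ a
    have hx0 : x = 0 :=
      Pseudoelement.zero_of_map_zero _ (Pseudoelement.pseudo_injective_of_mono e) x h1
    rw [hx0] at hx
    have hfa : f a = 0 := by rw [← hx]; exact Pseudoelement.apply_zero t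
    exact Pseudoelement.zero_of_map_zero _ (Pseudoelement.pseudo_injective_of_mono f) a hfa
  have hepi : Epi gbar := by
    apply Pseudoelement.epi_of_pseudo_surjective
    intro n
    obtain ⟨mm, hmm⟩ := Pseudoelement.pseudo_surjective_of_epi p n
    obtain ⟨d, hd⟩ := Pseudoelement.pseudo_surjective_of_epi g mm
    exact ⟨q d, by
      rw [← Pseudoelement.comp_apply, hcomm, Pseudoelement.comp_apply, hd, hmm]⟩
  refine ses_mk _ _ w0 ?_ hmono hepi
  apply Pseudoelement.exact_of_pseudo_exact
  intro b hb
  obtain ⟨d, hd⟩ := Pseudoelement.pseudo_surjective_of_epi q b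
  have h1 : p (g d) = 0 := by
    have h2 : gbar (q d) = 0 := by rw [hd]; exact hb
    rwa [← Pseudoelement.comp_apply, hcomm, Pseudoelement.comp_apply] at h2
  obtain ⟨x, hx⟩ := Pseudoelement.pseudo_exact_of_exact hep.ses_exact (g d) h1
  have h2 : g d = g (t x) := by rw [← Pseudoelement.comp_apply, ht, hx]
  obtain ⟨z, hz0, hz⟩ := Pseudoelement.sub_of_eq_image g d (t x) h2
  obtain ⟨a, ha⟩ := Pseudoelement.pseudo_exact_of_exact hfg.ses_exact z hz0
  refine ⟨a, ?_⟩
  have hqt : q (t x) = 0 := by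
    rw [← Pseudoelement.comp_apply, htq.1]
    exact Pseudoelement.zero_apply _ x
  have hq : q z = q d := hz E q hqt
  show (f ≫ q) a = b
  rw [Pseudoelement.comp_apply, ha, hq, hd]

end PseudoChase

end GenericAbelian

end IsSES

namespace RecollementStmtTen

open IsSES

variable (R : Recollement 𝒜 𝒞 ℬ)

lemma jStar_iIns_isZero (A : 𝒜) : IsZero (R.jStar.obj (R.iIns.obj A)) :=
  (R.im_eq_ker _).mpr ⟨A, ⟨Iso.refl _⟩⟩

lemma hom_jShriek_iIns {Y : ℬ} {A : 𝒜} (f : R.jShriek.obj Y ⟶ R.iIns.obj A) : f = 0 := by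
  haveI := R.jShriek_additive
  have h0 : (R.adj₃.homEquiv Y (R.iIns.obj A)) f = 0 :=
    (jStar_iIns_isZero R A).eq_of_tgt _ _
  have h1 := (R.adj₃.homEquiv Y (R.iIns.obj A)).symm_apply_apply f
  rw [h0] at h1
  rw [← h1, Adjunction.homEquiv_counit, Functor.map_zero, zero_comp]

lemma pfl_jStar : PreservesFiniteLimits R.jStar := by
  haveI : PreservesLimitsOfSize.{0,0} R.jStar := R.adj₃.rightAdjoint_preservesLimits
  exact PreservesLimitsOfSize.preservesFiniteLimits.{0,0} _

lemma pfc_jStar : PreservesFiniteColimits R.jStar := by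
  haveI : PreservesColimitsOfSize.{0,0} R.jStar := R.adj₄.leftAdjoint_preservesColimits
  exact PreservesColimitsOfSize.preservesFiniteColimits.{0,0} _

lemma pfc_iStar : PreservesFiniteColimits R.iStar := by
  haveI : PreservesColimitsOfSize.{0,0} R.iStar := R.adj₁.leftAdjoint_preservesColimits
  exact PreservesColimitsOfSize.preservesFiniteColimits.{0,0} _

lemma pfl_iShriek : PreservesFiniteLimits R.iShriek := by
  haveI : PreservesLimitsOfSize.{0,0} R.iShriek := R.adj₂.rightAdjoint_preservesLimits
  exact PreservesLimitsOfSize.preservesFiniteLimits.{0,0} _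

lemma pfl_iIns : PreservesFiniteLimits R.iIns := by
  haveI : PreservesLimitsOfSize.{0,0} R.iIns := R.adj₁.rightAdjoint_preservesLimits
  exact PreservesLimitsOfSize.preservesFiniteLimits.{0,0} _

lemma map_jStar_SES {X Y Z : 𝒞} {f : X ⟶ Y} {g : Y ⟶ Z} (hS : IsSES f g) :
    IsSES (R.jStar.map f) (R.jStar.map g) := by
  haveI := R.jStar_additive
  haveI := pfl_jStar R
  haveI := pfc_jStar R
  refine ⟨by rw [← Functor.map_comp, hS.1, Functor.map_zero], ?_⟩
  exact hS.2.map_of_exact R.jStar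

lemma isZero_jStar_kernel {X Y : 𝒞} (f : X ⟶ Y) [IsIso (R.jStar.map f)] :
    IsZero (R.jStar.obj (kernel f)) := by
  haveI := R.jStar_additive
  haveI := pfl_jStar R
  exact IsZero.of_iso (IsZero.of_iso (isZero_zero _) (kernel.ofMono (R.jStar.map f)))
    (PreservesKernel.iso R.jStar f)

lemma isZero_jStar_cokernel {X Y : 𝒞} (f : X ⟶ Y) [IsIso (R.jStar.map f)] :
    IsZero (R.jStar.obj (cokernel f)) := by
  haveI := R.jStar_additive
  haveI := pfc_jStar R
  exact IsZero.of_iso (IsZero.of_iso (isZero_zero _) (cokernel.ofEpi (R.jStar.map f)))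
    (PreservesCokernel.iso R.jStar f)

/-- Key lemma: for `X ∈ 𝒞₁`, the unit `X ⟶ j_* j^* X` is an epimorphism. -/
lemma epi_unit_of_C1 (X : 𝒞) (hX : IsZero (R.iStar.obj (R.jIns.obj (R.jStar.obj X)))) :
    Epi (R.adj₄.unit.app X) := by
  haveI := R.jIns_full
  haveI := R.jIns_faithful
  haveI := R.iIns_full
  haveI := R.iIns_faithful
  haveI := R.iIns_additive
  haveI : IsIso (R.jStar.map (R.adj₄.unit.app X)) := inferInstance
  have h1 : IsZero (R.jStar.obj (cokernel (R.adj₄.unit.app X))) :=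
    isZero_jStar_cokernel R _
  haveI := pfc_iStar R
  have h3 : IsZero (cokernel (R.iStar.map (R.adj₄.unit.app X))) :=
    IsSES.isZero_tgt_of_epi (cokernel.π (R.iStar.map (R.adj₄.unit.app X))) hX
  have h4 : IsZero (R.iStar.obj (cokernel (R.adj₄.unit.app X))) :=
    IsZero.of_iso h3 (PreservesCokernel.iso R.iStar _)
  obtain ⟨B, ⟨isoQ⟩⟩ := (R.im_eq_ker _).mp h1
  have h5 : IsZero (R.iStar.obj (R.iIns.obj B)) := IsZero.of_iso h4 (R.iStar.mapIso isoQ)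
  have h6 : IsZero B := IsZero.of_iso h5 (asIso (R.adj₁.counit.app B)).symm
  have h7 : IsZero (cokernel (R.adj₄.unit.app X)) :=
    IsZero.of_iso (R.iIns.map_isZero h6) isoQ.symm
  exact Preadditive.epi_of_cokernel_iso_zero h7.isoZero

/-- Lemma B: a short exact sequence `0 → i_* I → Y → Z → 0` with `I` injective and
`j^* Z = 0` splits. -/
lemma retraction_B {I : 𝒜} (hI : Injective I) {Y Z : 𝒞} {f : R.iIns.obj I ⟶ Y} {g : Y ⟶ Z}
    (hS : IsSES f g) (hZ : IsZero (R.jStar.obj Z)) :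
    ∃ r : Y ⟶ R.iIns.obj I, f ≫ r = 𝟙 _ := by
  haveI := R.iIns_full
  haveI := R.iIns_faithful
  haveI := pfl_iShriek R
  haveI := hS.ses_mono
  have hY : IsZero (R.jStar.obj Y) :=
    IsSES.ses_isZero_X₂ (map_jStar_SES R hS) (jStar_iIns_isZero R I) hZ
  obtain ⟨A₂, ⟨isoY⟩⟩ := (R.im_eq_ker Y).mp hY
  haveI : Mono (R.iShriek.map f) := preserves_mono_of_preservesLimit _ _
  haveI : Injective (R.iShriek.obj (R.iIns.obj I)) :=
    Injective.of_iso (asIso (R.adj₂.unit.app I)) hI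
  set rt : R.iShriek.obj Y ⟶ R.iShriek.obj (R.iIns.obj I) :=
    Injective.factorThru (𝟙 _) (R.iShriek.map f) with hrt_def
  have hrt : R.iShriek.map f ≫ rt = 𝟙 _ := Injective.comp_factorThru _ _
  set f₂ : I ⟶ A₂ := R.iIns.preimage (f ≫ isoY.inv) with hf₂_def
  have hf₂ : R.iIns.map f₂ = f ≫ isoY.inv := R.iIns.map_preimage _
  have hnat := R.adj₂.unit.naturality f₂
  dsimp at hnat
  have key0 : f₂ ≫ R.adj₂.unit.app A₂ ≫ R.iShriek.map isoY.hom
      = R.adj₂.unit.app I ≫ R.iShriek.map f := by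
    rw [← Category.assoc, hnat, Category.assoc, ← Functor.map_comp, hf₂, Category.assoc,
      Iso.inv_hom_id, Category.comp_id]
  have big : f₂ ≫ R.adj₂.unit.app A₂ ≫ R.iShriek.map isoY.hom ≫ rt ≫
      inv (R.adj₂.unit.app I) = 𝟙 I := by
    slice_lhs 1 3 => rw [key0]
    slice_lhs 2 3 => rw [hrt]
    simp
  refine ⟨isoY.inv ≫ R.iIns.map (R.adj₂.unit.app A₂ ≫ R.iShriek.map isoY.hom ≫ rt ≫
    inv (R.adj₂.unit.app I)), ?_⟩
  rw [← Category.assoc, ← hf₂, ← Functor.map_comp, big, CategoryTheory.Functor.map_id]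

end RecollementStmtTen

namespace RecollementStmtTen

open IsSES

/-- Direction "⇐": if the counit is mono, every extension of `M` by `i_* I` splits. -/
lemma splits_of_mono (R : Recollement 𝒜 𝒞 ℬ) (M : 𝒞)
    (hmono : Mono (R.adj₃.counit.app M))
    (I : 𝒜) (hI : Injective I) (D : 𝒞) (f : R.iIns.obj I ⟶ D) (g : D ⟶ M)
    (hSES : IsSES f g) : ∃ s : M ⟶ D, s ≫ g = 𝟙 M := by
  haveI := R.jShriek_full
  haveI := R.jShriek_faithful
  haveI := R.jShriek_additive
  haveI := hSES.ses_mono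
  haveI := hSES.ses_epi
  set ε : R.jShriek.obj (R.jStar.obj M) ⟶ M := R.adj₃.counit.app M with hε_def
  -- `j^* g` is an isomorphism
  have hSb := map_jStar_SES R hSES
  have hf0 : R.jStar.map f = 0 := (jStar_iIns_isZero R I).eq_of_src _ _
  haveI : Mono (R.jStar.map g) :=
    ((ShortComplex.exact_iff_mono (S := ShortComplex.mk _ _ hSb.1) hf0)).mp hSb.ses_exact
  haveI : Epi (R.jStar.map g) := hSb.ses_epi
  haveI : IsIso (R.jStar.map g) := isIso_of_mono_of_epi _
  -- the morphism `t : j_! j^* M ⟶ D`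
  set t : R.jShriek.obj (R.jStar.obj M) ⟶ D :=
    R.jShriek.map (inv (R.jStar.map g)) ≫ R.adj₃.counit.app D with ht_def
  have hnat := R.adj₃.counit.naturality g
  dsimp at hnat
  have ht : t ≫ g = ε := by
    rw [ht_def, hε_def, Category.assoc, ← hnat, ← Category.assoc, ← Functor.map_comp,
      IsIso.inv_hom_id, CategoryTheory.Functor.map_id, Category.id_comp]
  haveI : Mono t := by
    haveI : Mono (t ≫ g) := by rw [ht]; exact hmono
    exact mono_of_mono t g
  -- the two cokernels
  set N := cokernel ε with hN_def
  set π : M ⟶ N := cokernel.π ε with hπ_def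
  set E := cokernel t with hE_def
  set q : D ⟶ E := cokernel.π t with hq_def
  have hSεπ : IsSES ε π := by
    refine ses_mk _ _ (cokernel.condition ε) ?_ hmono inferInstance
    exact ShortComplex.exact_of_g_is_cokernel _ (cokernelIsCokernel ε)
  have hStq : IsSES t q := by
    refine ses_mk _ _ (cokernel.condition t) ?_ ‹_› inferInstance
    exact ShortComplex.exact_of_g_is_cokernel _ (cokernelIsCokernel t)
  set gbar : E ⟶ N := cokernel.desc t (g ≫ π)
    (by rw [← Category.assoc, ht, cokernel.condition]) with hgbar_def
  have hcomm : q ≫ gbar = g ≫ π := cokernel.π_desc _ _ _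
  -- the quotient SES `0 → i_* I → E → N → 0`
  have hE : IsSES (f ≫ q) gbar := quotSES hSES hStq hSεπ ht hcomm
  -- it splits by Lemma B
  haveI : IsIso (R.jStar.map ε) := inferInstance
  have hNzero : IsZero (R.jStar.obj N) := isZero_jStar_cokernel R ε
  obtain ⟨r, hr⟩ := retraction_B R hI hE hNzero
  obtain ⟨σ, hσ⟩ := section_of_retraction hE hr
  -- compare `D` with the pullback of `π` and `gbar`
  have w' : ε ≫ π = (0 : _ ⟶ E) ≫ gbar := by rw [cokernel.condition, zero_comp]
  have hQ := pullbackSES hSεπ gbar w'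
  set lam : D ⟶ pullback π gbar := pullback.lift g q hcomm.symm with hlam_def
  have hlamfst : lam ≫ pullback.fst π gbar = g := pullback.lift_fst _ _ _
  have hlamsnd : lam ≫ pullback.snd π gbar = q := pullback.lift_snd _ _ _
  have htlam : t ≫ lam = pullback.lift ε 0 w' := by
    apply pullback.hom_ext
    · rw [Category.assoc, hlamfst, pullback.lift_fst, ht]
    · rw [Category.assoc, hlamsnd, pullback.lift_snd, hStq.1]
  haveI : IsIso lam := isIso_comparison hStq hQ lam htlam hlamsnd
  -- the section
  set s0 : M ⟶ pullback π gbar := pullback.lift (𝟙 M) (π ≫ σ)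
    (by rw [Category.id_comp, Category.assoc, hσ, Category.comp_id]) with hs0_def
  refine ⟨s0 ≫ inv lam, ?_⟩
  rw [Category.assoc, ← hlamfst, IsIso.inv_hom_id_assoc, pullback.lift_fst]

/-- Direction "⇒": if every extension of `M` by `i_* I` splits, the counit is mono. -/
lemma mono_of_splits (R : Recollement 𝒜 𝒞 ℬ) [EnoughInjectives 𝒜] (M : 𝒞)
    (hM : IsZero (R.iStar.obj (R.jIns.obj (R.jStar.obj M))))
    (hsplit : ∀ (I : 𝒜), Injective I → ∀ (D : 𝒞) (f : R.iIns.obj I ⟶ D) (g : D ⟶ M),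
      IsSES f g → ∃ s : M ⟶ D, s ≫ g = 𝟙 M) :
    Mono (R.adj₃.counit.app M) := by
  haveI := R.jShriek_full
  haveI := R.jShriek_faithful
  haveI := R.jIns_full
  haveI := R.jIns_faithful
  haveI := R.jShriek_additive
  haveI := R.jStar_additive
  haveI := R.jIns_additive
  haveI := pfl_jStar R
  haveI := pfl_iIns R
  set ε : R.jShriek.obj (R.jStar.obj M) ⟶ M := R.adj₃.counit.app M with hε_def
  haveI : IsIso (R.jStar.map ε) := inferInstance
  -- the kernel `K` of `ε` and the mono `φ : K ⟶ i_* I`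
  set K := kernel ε with hK_def
  set k : K ⟶ R.jShriek.obj (R.jStar.obj M) := kernel.ι ε with hk_def
  have hKzero : IsZero (R.jStar.obj K) := isZero_jStar_kernel R ε
  obtain ⟨A₀, ⟨isoK⟩⟩ := (R.im_eq_ker K).mp hKzero
  set I : 𝒜 := Injective.under A₀ with hI_def
  set φ : K ⟶ R.iIns.obj I := isoK.inv ≫ R.iIns.map (Injective.ι A₀) with hφ_def
  haveI : Mono (R.iIns.map (Injective.ι A₀)) := preserves_mono_of_preservesLimit _ _
  haveI hφmono : Mono φ := mono_comp _ _
  -- the image factorization of `ε`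
  set Mb := Abelian.image ε with hMb_def
  set p : R.jShriek.obj (R.jStar.obj M) ⟶ Mb := Abelian.factorThruImage ε with hp_def
  set m : Mb ⟶ M := Abelian.image.ι ε with hm_def
  have hfac : p ≫ m = ε := Abelian.image.fac ε
  have hSkp : IsSES k p := imageSES ε
  -- `j^* m` is an isomorphism
  haveI : Mono (R.jStar.map m) := preserves_mono_of_preservesLimit _ _
  have hpm : R.jStar.map p ≫ R.jStar.map m = R.jStar.map ε := by
    rw [← Functor.map_comp, hfac]
  haveI : Epi (R.jStar.map m) := by
    haveI : Epi (R.jStar.map p ≫ R.jStar.map m) := by rw [hpm]; infer_instance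
    exact epi_of_epi (R.jStar.map p) _
  haveI : IsIso (R.jStar.map m) := isIso_of_mono_of_epi _
  -- `Mb ∈ 𝒞₁`, so the unit of `Mb` is epi
  have hMb1 : IsZero (R.iStar.obj (R.jIns.obj (R.jStar.obj Mb))) :=
    IsZero.of_iso hM (R.iStar.mapIso (R.jIns.mapIso (asIso (R.jStar.map m))))
  haveI hu : Epi (R.adj₄.unit.app Mb) := epi_unit_of_C1 R Mb hMb1
  set u : Mb ⟶ R.jIns.obj (R.jStar.obj Mb) := R.adj₄.unit.app Mb with hu_def
  set w : kernel u ⟶ Mb := kernel.ι u with hw_def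
  have hSwu : IsSES w u := by
    refine ses_mk _ _ (kernel.condition u) ?_ inferInstance ‹_›
    exact ShortComplex.exact_of_f_is_kernel _ (kernelIsKernel u)
  haveI : IsIso (R.jStar.map u) := inferInstance
  have hWzero : IsZero (R.jStar.obj (kernel u)) := isZero_jStar_kernel R u
  -- `v : Mb ⟶ j_* j^* M`
  set G : R.jIns.obj (R.jStar.obj Mb) ⟶ R.jIns.obj (R.jStar.obj M) :=
    R.jIns.map (R.jStar.map m) with hG_def
  haveI : IsIso G := by rw [hG_def]; infer_instance
  set v : Mb ⟶ R.jIns.obj (R.jStar.obj M) := m ≫ R.adj₄.unit.app M with hv_def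
  have hnat := R.adj₄.unit.naturality m
  dsimp at hnat
  have hv : v = u ≫ G := by rw [hv_def, hnat]
  have hSwv : IsSES w v := by rw [hv]; exact postcompSES hSwu G
  -- the pushout `P` of `k` along `φ`
  have wP : φ ≫ (0 : R.iIns.obj I ⟶ Mb) = k ≫ p := by rw [comp_zero, hSkp.1]
  have hP := pushoutSES hSkp φ wP
  set P := pushout φ k with hP_def
  set α : R.iIns.obj I ⟶ P := pushout.inl φ k with hα_def
  set β : P ⟶ Mb := pushout.desc 0 p wP with hβ_def
  -- lift `w` through `β` using Lemma B on the pullback of `β` along `w`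
  have wPW : α ≫ β = (0 : _ ⟶ kernel u) ≫ w := by rw [hP.1, zero_comp]
  have hPW := pullbackSES hP w wPW
  obtain ⟨rPW, hrPW⟩ := retraction_B R (Injective.injective_under A₀) hPW hWzero
  obtain ⟨sW, hsW⟩ := section_of_retraction hPW hrPW
  set σ : kernel u ⟶ P := sW ≫ pullback.fst β w with hσ_def
  have hσβ : σ ≫ β = w := by
    rw [hσ_def, Category.assoc, pullback.condition, ← Category.assoc, hsW, Category.id_comp]
  haveI : Mono σ := by
    haveI : Mono (σ ≫ β) := by rw [hσβ]; infer_instance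
    exact mono_of_mono σ β
  -- the quotient `E` and the SES `0 → i_* I → E → j_* j^* M → 0`
  set E := cokernel σ with hE_def
  set qE : P ⟶ E := cokernel.π σ with hqE_def
  have hSσq : IsSES σ qE := by
    refine ses_mk _ _ (cokernel.condition σ) ?_ ‹_› inferInstance
    exact ShortComplex.exact_of_g_is_cokernel _ (cokernelIsCokernel σ)
  have hwu : w ≫ u = 0 := kernel.condition u
  have hwv0 : σ ≫ β ≫ v = 0 := by
    rw [← Category.assoc, hσβ, hv, ← Category.assoc, hwu, zero_comp]
  set ebar : E ⟶ R.jIns.obj (R.jStar.obj M) := cokernel.desc σ (β ≫ v) hwv0 with hebar_def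
  have hcomm2 : qE ≫ ebar = β ≫ v := cokernel.π_desc _ _ _
  have hSE : IsSES (α ≫ qE) ebar := quotSES hP hSσq hSwv hσβ hcomm2
  -- pull back along the unit of `M` to get an extension of `M`
  have wDD : (α ≫ qE) ≫ ebar = (0 : _ ⟶ M) ≫ R.adj₄.unit.app M := by
    rw [hSE.1, zero_comp]
  have hDD := pullbackSES hSE (R.adj₄.unit.app M) wDD
  set DD := pullback ebar (R.adj₄.unit.app M) with hDD_def
  set fD : R.iIns.obj I ⟶ DD := pullback.lift (α ≫ qE) 0 wDD with hfD_def
  set gD : DD ⟶ M := pullback.snd ebar (R.adj₄.unit.app M) with hgD_def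
  -- the extension splits by hypothesis
  obtain ⟨s, hs⟩ := hsplit I (Injective.injective_under A₀) DD fD gD hDD
  -- compare `P` with the pullback of `gD` along `m`
  set θ : P ⟶ DD := pullback.lift qE (β ≫ m)
    (by rw [hcomm2, hv_def, Category.assoc]) with hθ_def
  have hθfst : θ ≫ pullback.fst ebar (R.adj₄.unit.app M) = qE := pullback.lift_fst _ _ _
  have hθsnd : θ ≫ gD = β ≫ m := pullback.lift_snd _ _ _
  have wQ2 : fD ≫ gD = (0 : _ ⟶ Mb) ≫ m := by
    rw [hfD_def, hgD_def, pullback.lift_snd, zero_comp]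
  have hQ2 := pullbackSES hDD m wQ2
  set θ₂ : P ⟶ pullback gD m := pullback.lift θ β hθsnd with hθ₂_def
  have hθ₂fst : θ₂ ≫ pullback.fst gD m = θ := pullback.lift_fst _ _ _
  have hθ₂snd : θ₂ ≫ pullback.snd gD m = β := pullback.lift_snd _ _ _
  have hαθ : α ≫ θ = fD := by
    apply pullback.hom_ext
    · rw [Category.assoc, hθfst, hfD_def, pullback.lift_fst]
    · rw [Category.assoc, hθsnd, hfD_def, pullback.lift_snd, ← Category.assoc, hP.1, zero_comp]
  have hαθ₂ : α ≫ θ₂ = pullback.lift fD 0 wQ2 := by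
    apply pullback.hom_ext
    · rw [Category.assoc, hθ₂fst, hαθ, pullback.lift_fst]
    · rw [Category.assoc, hθ₂snd, hP.1, pullback.lift_snd]
  haveI : IsIso θ₂ := isIso_comparison hP hQ2 θ₂ hαθ₂ hθ₂snd
  -- the section of `β`
  set τ : Mb ⟶ pullback gD m := pullback.lift (m ≫ s) (𝟙 Mb)
    (by rw [Category.assoc, hs, Category.comp_id, Category.id_comp]) with hτ_def
  have hτP : (τ ≫ inv θ₂) ≫ β = 𝟙 Mb := by
    rw [← hθ₂snd, Category.assoc, IsIso.inv_hom_id_assoc, hτ_def, pullback.lift_snd]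
  obtain ⟨ρ, hρ⟩ := retraction_of_section hP hτP
  -- conclude that `φ = 0`
  have hφ0 : φ = 0 := by
    have h1 : φ ≫ α ≫ ρ = φ := by rw [hρ, Category.comp_id]
    rw [← h1, hα_def, ← Category.assoc, pushout.condition, Category.assoc,
      hom_jShriek_iIns R (pushout.inr φ k ≫ ρ), comp_zero]
  have hKz : IsZero K := IsSES.isZero_of_mono_eq_zero φ hφ0
  exact Abelian.mono_of_kernel_ι_eq_zero _ (hKz.eq_of_src _ _)

end RecollementStmtTen

/-- Suppose `𝒜` has enough injectives and `M ∈ 𝒞₁`, i.e. `i^* j_* j^*(M) = 0`. Then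
`Ext¹_𝒞(M, i_*(I)) = 0` for every injective object `I` of `𝒜` (i.e. every short exact
sequence `0 → i_*(I) → D → M → 0` splits) if and only if the counit
`ε_M : j_! j^*(M) → M` is a monomorphism. -/
theorem stmt_10 (R : Recollement 𝒜 𝒞 ℬ) [EnoughInjectives 𝒜] (M : 𝒞)
    (hM : IsZero (R.iStar.obj (R.jIns.obj (R.jStar.obj M)))) :
    (∀ (I : 𝒜), Injective I → ∀ (D : 𝒞) (f : R.iIns.obj I ⟶ D) (g : D ⟶ M),
        IsSES f g → ∃ s : M ⟶ D, s ≫ g = 𝟙 M) ↔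
      Mono (R.adj₃.counit.app M) := by
  constructor
  · intro hsplit
    exact RecollementStmtTen.mono_of_splits R M hM hsplit
  · intro hmono I hI D f g hS
    exact RecollementStmtTen.splits_of_mono R M hmono I hI D f g hS
end

section
/- Let (A, C, B) be a recollement of abelian categories and let C₁ and B₁ be the exact subcategories defined by C₁ = {C : i^* j_* j^*(C) = 0} and B₁ = j^*(C₁). If P is a projective object of the exact category B₁, then j_!(P) is a projective object of the exact category C₁. -/
open CategoryTheory CategoryTheory.Limits

universe v₁ v₂ v₃ u₁ u₂ u₃

variable {𝒜 : Type u₁} {𝒞 : Type u₂} {ℬ : Type u₃}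
  [Category.{v₁} 𝒜] [Category.{v₂} 𝒞] [Category.{v₃} ℬ]
  [Abelian 𝒜] [Abelian 𝒞] [Abelian ℬ]

/-- `X` belongs to `𝒞₁ = {C ∈ 𝒞 : i^* j_* j^*(C) = 0}`. -/
def InC₁ (R : Recollement 𝒜 𝒞 ℬ) (X : 𝒞) : Prop :=
  IsZero (R.iStar.obj (R.jIns.obj (R.jStar.obj X)))

/-- `Y` belongs to `ℬ₁ = {B ∈ ℬ : B ≅ j^*(C) for some C ∈ 𝒞₁}`. -/
def InB₁ (R : Recollement 𝒜 𝒞 ℬ) (Y : ℬ) : Prop :=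
  ∃ X : 𝒞, InC₁ R X ∧ Nonempty (Y ≅ R.jStar.obj X)

/-- `g` is an admissible epimorphism of the exact category `𝒞₁`: it is part of a short
exact sequence in `𝒞` all of whose terms lie in `𝒞₁`. -/
def AdmEpiC₁ (R : Recollement 𝒜 𝒞 ℬ) {Y Z : 𝒞} (g : Y ⟶ Z) : Prop :=
  InC₁ R Y ∧ InC₁ R Z ∧ ∃ (K : 𝒞) (f : K ⟶ Y), InC₁ R K ∧ IsSES f g

/-- `P` is a projective object of the exact category `𝒞₁`. -/
def ProjC₁ (R : Recollement 𝒜 𝒞 ℬ) (P : 𝒞) : Prop :=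
  InC₁ R P ∧ ∀ {Y Z : 𝒞} (g : Y ⟶ Z), AdmEpiC₁ R g →
    ∀ u : P ⟶ Z, ∃ v : P ⟶ Y, v ≫ g = u

/-- `g` is an admissible epimorphism of the exact category `ℬ₁`. -/
def AdmEpiB₁ (R : Recollement 𝒜 𝒞 ℬ) {Y Z : ℬ} (g : Y ⟶ Z) : Prop :=
  InB₁ R Y ∧ InB₁ R Z ∧ ∃ (K : ℬ) (f : K ⟶ Y), InB₁ R K ∧ IsSES f g

/-- `P` is a projective object of the exact category `ℬ₁`. -/
def ProjB₁ (R : Recollement 𝒜 𝒞 ℬ) (P : ℬ) : Prop :=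
  InB₁ R P ∧ ∀ {Y Z : ℬ} (g : Y ⟶ Z), AdmEpiB₁ R g →
    ∀ u : P ⟶ Z, ∃ v : P ⟶ Y, v ≫ g = u

/-- If `P` is a projective object of the exact category `ℬ₁`, then `j_!(P)` is a
projective object of the exact category `𝒞₁`. -/
theorem stmt_12 (R : Recollement 𝒜 𝒞 ℬ) (P : ℬ) (hP : ProjB₁ R P) :
    ProjC₁ R (R.jShriek.obj P) := by
  haveI := R.jShriek_full
  haveI := R.jShriek_faithful
  haveI := R.jStar_additive
  haveI : PreservesLimitsOfSize.{0,0} R.jStar := R.adj₃.rightAdjoint_preservesLimits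
  haveI : PreservesColimitsOfSize.{0,0} R.jStar := R.adj₄.leftAdjoint_preservesColimits
  haveI : PreservesFiniteLimits R.jStar :=
    PreservesLimitsOfSize.preservesFiniteLimits R.jStar
  haveI : PreservesFiniteColimits R.jStar :=
    PreservesColimitsOfSize.preservesFiniteColimits R.jStar
  obtain ⟨hPmem, hPproj⟩ := hP
  constructor
  · obtain ⟨X, hX, ⟨e⟩⟩ := hPmem
    have e1 : R.jStar.obj (R.jShriek.obj P) ≅ R.jStar.obj X :=
      (asIso (R.adj₃.unit.app P)).symm ≪≫ e
    exact hX.of_iso (R.iStar.mapIso (R.jIns.mapIso e1))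
  · intro Y Z g hg u
    obtain ⟨hY, hZ, K, f, hK, w, hses⟩ := hg
    have hw' : R.jStar.map f ≫ R.jStar.map g = 0 := by
      rw [← R.jStar.map_comp, w, R.jStar.map_zero]
    have hses' : (ShortComplex.mk (R.jStar.map f) (R.jStar.map g) hw').ShortExact :=
      hses.map_of_exact R.jStar
    have hadm : AdmEpiB₁ R (R.jStar.map g) :=
      ⟨⟨Y, hY, ⟨Iso.refl _⟩⟩, ⟨Z, hZ, ⟨Iso.refl _⟩⟩,
        R.jStar.obj K, R.jStar.map f, ⟨K, hK, ⟨Iso.refl _⟩⟩, hw', hses'⟩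
    obtain ⟨v', hv'⟩ := hPproj (R.jStar.map g) hadm (R.adj₃.homEquiv P Z u)
    refine ⟨(R.adj₃.homEquiv P Y).symm v', ?_⟩
    apply (R.adj₃.homEquiv P Z).injective
    rw [R.adj₃.homEquiv_naturality_right, Equiv.apply_symm_apply, hv']
end

section
/- Let (A, C, B) be a recollement of abelian categories and C₁ the exact subcategory {C : i^* j_* j^*(C) = 0}. If Q is a projective object of A, then i_*(Q) is a projective object of the exact category C₁; dually, if H is a projective object of C₁, then i^*(H) is a projective object of A. -/
open CategoryTheory CategoryTheory.Limits

universe v₁ v₂ v₃ u₁ u₂ u₃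

variable {𝒜 : Type u₁} {𝒞 : Type u₂} {ℬ : Type u₃}
  [Category.{v₁} 𝒜] [Category.{v₂} 𝒞] [Category.{v₃} ℬ]
  [Abelian 𝒜] [Abelian 𝒞] [Abelian ℬ]

section AuxiliaryLemmas

open CategoryTheory.Abelian

attribute [local instance] CategoryTheory.Abelian.Pseudoelement.objectToSort
  CategoryTheory.Abelian.Pseudoelement.homToFun

lemma isZero_of_mono_eq_zero {𝒟 : Type*} [Category 𝒟] [Abelian 𝒟] {X Y : 𝒟}
    (f : X ⟶ Y) [Mono f] (hf : f = 0) : IsZero X := by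
  rw [IsZero.iff_id_eq_zero, ← cancel_mono f, hf, comp_zero, zero_comp]

lemma isZero_of_epi_eq_zero {𝒟 : Type*} [Category 𝒟] [Abelian 𝒟] {X Y : 𝒟}
    (f : X ⟶ Y) [Epi f] (hf : f = 0) : IsZero Y := by
  rw [IsZero.iff_id_eq_zero, ← cancel_epi f, hf, comp_zero, zero_comp]

lemma isZero_jStar_iIns (R : Recollement 𝒜 𝒞 ℬ) (A₀ : 𝒜) :
    IsZero (R.jStar.obj (R.iIns.obj A₀)) :=
  (R.im_eq_ker _).mpr ⟨A₀, ⟨Iso.refl _⟩⟩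

lemma inC₁_iIns (R : Recollement 𝒜 𝒞 ℬ) (Q : 𝒜) : InC₁ R (R.iIns.obj Q) := by
  haveI := R.iStar_additive
  haveI := R.jIns_additive
  exact R.iStar.map_isZero (R.jIns.map_isZero (isZero_jStar_iIns R Q))

lemma isIso_jStar_map_unit₄ (R : Recollement 𝒜 𝒞 ℬ) (X : 𝒞) :
    IsIso (R.jStar.map (R.adj₄.unit.app X)) := by
  haveI := R.jIns_full; haveI := R.jIns_faithful
  exact isIso_of_comp_hom_eq_id (R.adj₄.counit.app (R.jStar.obj X))
    (R.adj₄.left_triangle_components X)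

lemma mono_counit₂ (R : Recollement 𝒜 𝒞 ℬ) (X : 𝒞) : Mono (R.adj₂.counit.app X) := by
  haveI := R.iIns_full; haveI := R.iIns_faithful
  haveI := R.iShriek_additive; haveI := R.jStar_additive; haveI := R.iIns_additive
  haveI : R.iShriek.IsRightAdjoint := R.adj₂.isRightAdjoint
  haveI : R.jStar.IsRightAdjoint := R.adj₃.isRightAdjoint
  apply Preadditive.mono_of_isZero_kernel
  have hj0 : R.jStar.map (kernel.ι (R.adj₂.counit.app X)) = 0 :=
    (isZero_jStar_iIns R (R.iShriek.obj X)).eq_of_tgt _ _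
  have hjN : IsZero (R.jStar.obj (kernel (R.adj₂.counit.app X))) :=
    isZero_of_mono_eq_zero _ hj0
  obtain ⟨A₀, ⟨e⟩⟩ := (R.im_eq_ker _).mp hjN
  haveI : IsIso (R.iShriek.map (R.adj₂.counit.app X)) := inferInstance
  have h0 : R.iShriek.map (kernel.ι (R.adj₂.counit.app X)) = 0 := by
    apply (cancel_mono (R.iShriek.map (R.adj₂.counit.app X))).1
    rw [zero_comp, ← Functor.map_comp, kernel.condition, Functor.map_zero]
  have hiN : IsZero (R.iShriek.obj (kernel (R.adj₂.counit.app X))) :=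
    isZero_of_mono_eq_zero _ h0
  haveI : IsIso (R.adj₂.unit.app A₀) := inferInstance
  have hA : IsZero A₀ :=
    hiN.of_iso (asIso (R.adj₂.unit.app A₀) ≪≫ R.iShriek.mapIso e)
  exact (R.iIns.map_isZero hA).of_iso e.symm

lemma counit₂_comp_unit₄ (R : Recollement 𝒜 𝒞 ℬ) (X : 𝒞) :
    R.adj₂.counit.app X ≫ R.adj₄.unit.app X = 0 := by
  haveI := R.jIns_additive
  have h := isZero_jStar_iIns R (R.iShriek.obj X)
  apply (R.adj₄.homEquiv _ _).symm.injective
  exact IsZero.eq_of_src h _ _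

noncomputable def isKernelCounit₂ (R : Recollement 𝒜 𝒞 ℬ) (X : 𝒞) :
    IsLimit (KernelFork.ofι (R.adj₂.counit.app X) (counit₂_comp_unit₄ R X)) := by
  haveI := R.jIns_full; haveI := R.jIns_faithful
  haveI := R.jStar_additive; haveI := R.iIns_additive
  haveI : R.jStar.IsRightAdjoint := R.adj₃.isRightAdjoint
  haveI : IsIso (R.jStar.map (R.adj₄.unit.app X)) := isIso_jStar_map_unit₄ R X
  haveI : Mono (R.adj₂.counit.app X) := mono_counit₂ R X
  have hκ0 : R.jStar.map (kernel.ι (R.adj₄.unit.app X)) = 0 := by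
    apply (cancel_mono (R.jStar.map (R.adj₄.unit.app X))).1
    rw [zero_comp, ← Functor.map_comp, kernel.condition, Functor.map_zero]
  have hjN : IsZero (R.jStar.obj (kernel (R.adj₄.unit.app X))) :=
    isZero_of_mono_eq_zero _ hκ0
  have hex := (R.im_eq_ker _).mp hjN
  let A₀ : 𝒜 := hex.choose
  let e : R.iIns.obj A₀ ≅ kernel (R.adj₄.unit.app X) := hex.choose_spec.some
  have hkey : R.iIns.map (R.adj₂.homEquiv A₀ X (e.hom ≫ kernel.ι (R.adj₄.unit.app X)))
      ≫ R.adj₂.counit.app X = e.hom ≫ kernel.ι (R.adj₄.unit.app X) := by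
    simp [Adjunction.homEquiv_unit]
  refine KernelFork.IsLimit.ofι' _ _ (fun {T} t ht => ⟨kernel.lift _ t ht ≫ e.inv ≫
    R.iIns.map (R.adj₂.homEquiv A₀ X (e.hom ≫ kernel.ι (R.adj₄.unit.app X))), ?_⟩)
  rw [Category.assoc, Category.assoc, hkey, Iso.inv_hom_id_assoc, kernel.lift_ι]

lemma epi_unit₄ (R : Recollement 𝒜 𝒞 ℬ) {X : 𝒞} (hX : InC₁ R X) :
    Epi (R.adj₄.unit.app X) := by
  haveI := R.iIns_full; haveI := R.iIns_faithful
  haveI := R.iStar_additive; haveI := R.jStar_additive; haveI := R.iIns_additive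
  haveI : R.jStar.IsLeftAdjoint := R.adj₄.isLeftAdjoint
  haveI : R.iStar.IsLeftAdjoint := R.adj₁.isLeftAdjoint
  apply Preadditive.epi_of_isZero_cokernel
  haveI : IsIso (R.jStar.map (R.adj₄.unit.app X)) := isIso_jStar_map_unit₄ R X
  have h0 : R.jStar.map (cokernel.π (R.adj₄.unit.app X)) = 0 := by
    apply (cancel_epi (R.jStar.map (R.adj₄.unit.app X))).1
    rw [comp_zero, ← Functor.map_comp, cokernel.condition, Functor.map_zero]
  have hjc : IsZero (R.jStar.obj (cokernel (R.adj₄.unit.app X))) :=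
    isZero_of_epi_eq_zero _ h0
  obtain ⟨A₀, ⟨e⟩⟩ := (R.im_eq_ker _).mp hjc
  have h2 : R.iStar.map (cokernel.π (R.adj₄.unit.app X)) = 0 := hX.eq_of_src _ _
  have hic : IsZero (R.iStar.obj (cokernel (R.adj₄.unit.app X))) :=
    isZero_of_epi_eq_zero _ h2
  haveI : IsIso (R.adj₁.counit.app A₀) := inferInstance
  have hA : IsZero A₀ := hic.of_iso ((asIso (R.adj₁.counit.app A₀)).symm ≪≫ R.iStar.mapIso e)
  exact (R.iIns.map_isZero hA).of_iso e.symm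

lemma epi_iShriek_map (R : Recollement 𝒜 𝒞 ℬ) {K W V : 𝒞} {f : K ⟶ W} {g : W ⟶ V}
    (hK : InC₁ R K) (w : f ≫ g = 0) (hse : (ShortComplex.mk f g w).ShortExact) :
    Epi (R.iShriek.map g) := by
  haveI := R.iIns_full; haveI := R.iIns_faithful
  haveI := R.jIns_full; haveI := R.jIns_faithful
  haveI := R.iStar_additive; haveI := R.iIns_additive; haveI := R.iShriek_additive
  haveI := R.jStar_additive; haveI := R.jIns_additive
  haveI : PreservesLimitsOfSize.{0,0} R.jStar := R.adj₃.rightAdjoint_preservesLimits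
  haveI : PreservesLimitsOfSize.{0,0} R.jIns := R.adj₄.rightAdjoint_preservesLimits
  haveI := hse.mono_f
  haveI := hse.epi_g
  have hex : ((ShortComplex.mk f g w).map (R.jStar ⋙ R.jIns)).Exact :=
    hse.exact.map_of_mono_of_preservesKernel _ hse.mono_f inferInstance
  have hexW : (ShortComplex.mk (R.adj₂.counit.app W) (R.adj₄.unit.app W)
      (counit₂_comp_unit₄ R W)).Exact :=
    ShortComplex.exact_of_f_is_kernel _ (isKernelCounit₂ R W)
  haveI : Mono (R.adj₂.counit.app V) := mono_counit₂ R V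
  haveI : Epi (R.adj₄.unit.app K) := epi_unit₄ R hK
  have hnatf : f ≫ R.adj₄.unit.app W = R.adj₄.unit.app K ≫ (R.jStar ⋙ R.jIns).map f := by
    simpa using R.adj₄.unit.naturality f
  have hnatg : g ≫ R.adj₄.unit.app V = R.adj₄.unit.app W ≫ (R.jStar ⋙ R.jIns).map g := by
    simpa using R.adj₄.unit.naturality g
  have hnatc : R.iIns.map (R.iShriek.map g) ≫ R.adj₂.counit.app V
      = R.adj₂.counit.app W ≫ g := by
    simpa using R.adj₂.counit.naturality g
  apply R.iIns.epi_of_epi_map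
  apply Pseudoelement.epi_of_pseudo_surjective
  intro z
  obtain ⟨y, hy⟩ := Pseudoelement.pseudo_surjective_of_epi g
    (Pseudoelement.pseudoApply (R.adj₂.counit.app V) z)
  have hb : Pseudoelement.pseudoApply ((R.jStar ⋙ R.jIns).map g)
      (Pseudoelement.pseudoApply (R.adj₄.unit.app W) y) = 0 := by
    rw [← Pseudoelement.comp_apply, ← hnatg, Pseudoelement.comp_apply, hy,
      ← Pseudoelement.comp_apply, counit₂_comp_unit₄ R V, Pseudoelement.zero_apply]
  obtain ⟨c, hc⟩ := Pseudoelement.pseudo_exact_of_exact hex _ hb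
  have hc' : Pseudoelement.pseudoApply ((R.jStar ⋙ R.jIns).map f) c
      = Pseudoelement.pseudoApply (R.adj₄.unit.app W) y := hc
  obtain ⟨k, hk⟩ := Pseudoelement.pseudo_surjective_of_epi (R.adj₄.unit.app K) c
  have h2 : Pseudoelement.pseudoApply (R.adj₄.unit.app W) y
      = Pseudoelement.pseudoApply (R.adj₄.unit.app W) (Pseudoelement.pseudoApply f k) := by
    rw [← Pseudoelement.comp_apply, hnatf, Pseudoelement.comp_apply, hk, hc']
  obtain ⟨y', hy'0, hy'⟩ := Pseudoelement.sub_of_eq_image (R.adj₄.unit.app W) y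
    (Pseudoelement.pseudoApply f k) h2
  have hgy' : Pseudoelement.pseudoApply g y' = Pseudoelement.pseudoApply g y := by
    apply hy' V g
    rw [← Pseudoelement.comp_apply, w, Pseudoelement.zero_apply]
  obtain ⟨x', hx'⟩ := Pseudoelement.pseudo_exact_of_exact hexW y' hy'0
  have hx'' : Pseudoelement.pseudoApply (R.adj₂.counit.app W) x' = y' := hx'
  refine ⟨x', Pseudoelement.pseudo_injective_of_mono (R.adj₂.counit.app V) ?_⟩
  rw [← Pseudoelement.comp_apply, hnatc, Pseudoelement.comp_apply, hx'', hgy', hy]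

end AuxiliaryLemmas

/-- If `Q` is a projective object of `𝒜`, then `i_*(Q)` is a projective object of the
exact category `𝒞₁`; dually, if `H` is a projective object of `𝒞₁`, then `i^*(H)` is a
projective object of `𝒜`. -/
theorem stmt_13 (R : Recollement 𝒜 𝒞 ℬ) :
    (∀ Q : 𝒜, Projective Q → ProjC₁ R (R.iIns.obj Q)) ∧
    (∀ H : 𝒞, ProjC₁ R H → Projective (R.iStar.obj H)) := by
  constructor
  · intro Q hQ
    haveI := hQ
    refine ⟨inC₁_iIns R Q, ?_⟩
    intro Y Z g hg u
    obtain ⟨hY, hZ, K, f, hK, w, hse⟩ := hg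
    haveI : Epi (R.iShriek.map g) := epi_iShriek_map R hK w hse
    obtain ⟨t, ht⟩ := Projective.factors (R.adj₂.homEquiv Q Z u) (R.iShriek.map g)
    refine ⟨(R.adj₂.homEquiv Q Y).symm t, ?_⟩
    apply (R.adj₂.homEquiv Q Z).injective
    rw [R.adj₂.homEquiv_naturality_right, Equiv.apply_symm_apply, ht]
  · intro H hH
    obtain ⟨hH₁, hlift⟩ := hH
    haveI := R.iIns_additive
    haveI : R.iIns.IsRightAdjoint := R.adj₁.isRightAdjoint
    haveI : R.iIns.IsLeftAdjoint := R.adj₂.isLeftAdjoint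
    haveI : PreservesLimitsOfSize.{0,0} R.iIns := R.adj₁.rightAdjoint_preservesLimits
    constructor
    intro E X u e he
    haveI := he
    have w₀ : kernel.ι e ≫ e = 0 := kernel.condition e
    have hse₀ : (ShortComplex.mk (kernel.ι e) e w₀).ShortExact :=
      { exact := ShortComplex.exact_of_f_is_kernel _ (kernelIsKernel e) }
    have w₁ : R.iIns.map (kernel.ι e) ≫ R.iIns.map e = 0 := by
      rw [← Functor.map_comp, kernel.condition, Functor.map_zero]
    have hse₁ : (ShortComplex.mk (R.iIns.map (kernel.ι e)) (R.iIns.map e) w₁).ShortExact :=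
      { exact := hse₀.exact.map_of_mono_of_preservesKernel R.iIns hse₀.mono_f inferInstance
        mono_f := inferInstance
        epi_g := inferInstance }
    obtain ⟨v, hv⟩ := hlift (R.iIns.map e)
      ⟨inC₁_iIns R E, inC₁_iIns R X, R.iIns.obj (kernel e), R.iIns.map (kernel.ι e),
        inC₁_iIns R _, w₁, hse₁⟩ (R.adj₁.homEquiv H X u)
    refine ⟨(R.adj₁.homEquiv H E).symm v, ?_⟩
    apply (R.adj₁.homEquiv H X).injective
    rw [R.adj₁.homEquiv_naturality_right, Equiv.apply_symm_apply, hv]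
end

section
/- Let Λ = [[R, M], [0, S]] be an upper triangular matrix ring, where M is an (R, S)-bimodule such that M is flat as a right S-module and M ⊗_S E is an injective left R-module for every injective left S-module E. Then an object X = (X₁, X₂, φ) of the monomorphism category Mon(Λ) (where φ : M ⊗_S X₂ → X₁ is a monomorphism of R-modules) is injective in Mon(Λ) if and only if X₁ is an injective R-module, X₂ is an injective S-module, and φ is a monomorphism. -/
/-!
Write `X = (X₁, X₂, φ)`. If `X` is injective in `Mon(Λ)`, test it against two admissible
monomorphisms and split them. Embedding `X₁ ↪ I` into an injective gives
`(X₁, X₂, φ) → (I, X₂, ιφ)` with cokernel `(I/X₁, 0, 0) ∈ Mon(Λ)`. Embedding `ι : X₂ ↪ I` and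
pushing `φ` out along `T ι` (a monomorphism by flatness) gives a monomorphism whose cokernel has
structure map `T(I/X₂) ≅ coker (T ι) ≅ coker` of the pushout, an isomorphism by right exactness.

Conversely, if `X₁` and `X₂` are injective, the left component of an admissible `u : X → Y`
splits, so `Y₂ ≅ X₂ ⊕ Z₂`. The map `X₁ ⊕ T Z₂ → Y₁` is a monomorphism, as its composite with
`Y₁ → Z₁` is `φ_Z` on `T Z₂` and zero on `X₁`; extending the projection onto `X₁` along it gives a
retraction of `u₁` compatible with the structure maps.
-/

open CategoryTheory CategoryTheory.Limits

universe u

variable {R S : Type u} [Ring R] [Ring S]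

/-- For the upper triangular matrix ring `Λ = [[R, M], [0, S]]`, left `Λ`-modules are
identified with triples `(X₁, X₂, φ)` where `X₁` is a left `R`-module, `X₂` is a left
`S`-module and `φ : M ⊗_S X₂ → X₁` is `R`-linear.  We model this as the comma category
of the right exact functor `T = M ⊗_S − : S-Mod ⥤ R-Mod` over the identity of `R-Mod`:
an object `X` has `X.left = X₂`, `X.right = X₁` and `X.hom = φ : T(X₂) ⟶ X₁`. -/
abbrev TriMod (T : ModuleCat.{u} S ⥤ ModuleCat.{u} R) :=
  Comma T (𝟭 (ModuleCat.{u} R))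

variable (T : ModuleCat.{u} S ⥤ ModuleCat.{u} R)

/-- Membership in the monomorphism category `Mon(Λ)`: the structure map
`φ : M ⊗_S X₂ → X₁` is a monomorphism. -/
def InMon (X : TriMod T) : Prop := Mono X.hom

/-- A short exact sequence of `Λ`-modules (equivalently, a componentwise short exact
sequence of triples); these are the admissible short exact sequences of the exact
category `Mon(Λ)` when all three terms lie in `Mon(Λ)`. -/
def TriSES {X Y Z : TriMod T} (f : X ⟶ Y) (g : Y ⟶ Z) : Prop :=
  (∃ w : f.left ≫ g.left = 0, (ShortComplex.mk f.left g.left w).ShortExact) ∧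
  (∃ w : f.right ≫ g.right = 0, (ShortComplex.mk f.right g.right w).ShortExact)

/-- `X` is an injective object of the exact category `Mon(Λ)`: `X ∈ Mon(Λ)` and every
admissible monomorphism out of `X` in `Mon(Λ)` splits. -/
def MonInjective (X : TriMod T) : Prop :=
  InMon T X ∧ ∀ {Y Z : TriMod T} (u : X ⟶ Y) (g : Y ⟶ Z), InMon T Y → InMon T Z →
    TriSES T u g → ∃ r : Y ⟶ X, u ≫ r = 𝟙 X

lemma shortExact_cokernel {C : Type*} [Category C] [Abelian C] {A B : C} (f : A ⟶ B) [Mono f] :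
    ∃ w : f ≫ cokernel.π f = 0, (ShortComplex.mk f (cokernel.π f) w).ShortExact :=
  ⟨cokernel.condition f, .mk' (ShortComplex.exact_of_g_is_cokernel _ (cokernelIsCokernel f))
    ‹_› inferInstance⟩

lemma mono_biprod_desc_of_mono_comp {C : Type*} [Category C] [Preadditive C]
    [HasBinaryBiproducts C] {A B D E : C} (f : A ⟶ D) (j : B ⟶ D) (g : D ⟶ E) [Mono f]
    (hfg : f ≫ g = 0) [Mono (j ≫ g)] : Mono (biprod.desc f j) := by
  refine Preadditive.mono_of_cancel_zero _ fun x hx => ?_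
  have hdesc : biprod.desc f j ≫ g = biprod.snd ≫ j ≫ g := by ext <;> simp [hfg]
  have hsnd : x ≫ biprod.snd = 0 := zero_of_comp_mono (j ≫ g) (by simpa [hdesc] using hx =≫ g)
  rw [biprod.desc_eq, Preadditive.comp_add, reassoc_of% hsnd, zero_comp, add_zero] at hx
  have hfst : x ≫ biprod.fst = 0 := zero_of_comp_mono f (by simpa using hx)
  ext <;> simp [hfst, hsnd]

variable {T}

theorem MonInjective.exists_retraction {X Y : TriMod T} (hX : MonInjective T X)
    (u : X ⟶ Y) [Mono u.left] [Mono u.right] (hY : InMon T Y)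
    (φ : T.obj (cokernel u.left) ⟶ cokernel u.right) [Mono φ]
    (hφ : T.map (cokernel.π u.left) ≫ φ = Y.hom ≫ cokernel.π u.right) :
    ∃ r : Y ⟶ X, u ≫ r = 𝟙 X :=
  hX.2 (Z := ⟨cokernel u.left, cokernel u.right, φ⟩) u ⟨cokernel.π u.left, cokernel.π u.right, hφ⟩
    hY ‹Mono φ› ⟨shortExact_cokernel u.left, shortExact_cokernel u.right⟩

theorem MonInjective.injective_right [T.PreservesZeroMorphisms] {X : TriMod T} (hX : MonInjective T X) :
    Injective X.right := by
  have : Mono X.hom := hX.1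
  have hzero : IsZero (T.obj (cokernel (𝟙 X.left))) := T.map_isZero (isZero_cokernel_of_epi _)
  have : Mono (0 : T.obj (cokernel (𝟙 X.left)) ⟶ cokernel (Injective.ι X.right)) :=
    ⟨fun _ _ _ => hzero.eq_of_tgt _ _⟩
  let u : X ⟶ ⟨X.left, Injective.under X.right, X.hom ≫ Injective.ι X.right⟩ :=
    ⟨𝟙 X.left, Injective.ι X.right, by simp⟩
  have : Mono u.right := Injective.ι_mono X.right
  obtain ⟨r, hr⟩ := hX.exists_retraction u (mono_comp X.hom (Injective.ι X.right)) 0 (by simp [u])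
  exact (Retract.mk _ r.right (congrArg CommaMorphism.right hr)).injective

theorem MonInjective.injective_left [T.PreservesZeroMorphisms] [PreservesFiniteColimits T]
    (hflat : ∀ {X Y : ModuleCat.{u} S} (f : X ⟶ Y), Mono f → Mono (T.map f))
    {X : TriMod T} (hX : MonInjective T X) : Injective X.left := by
  have : Mono X.hom := hX.1
  let ι := Injective.ι X.left
  have : Mono (T.map ι) := hflat ι inferInstance
  have sq := (IsPushout.of_hasPushout X.hom (T.map ι)).flip
  have := isIso_cokernel_map_of_isPushout sq
  let u : X ⟶ ⟨Injective.under X.left, pushout X.hom (T.map ι), pushout.inr _ _⟩ :=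
    ⟨ι, pushout.inl _ _, sq.w⟩
  have : Mono u.left := Injective.ι_mono X.left
  have : Mono u.right := inferInstanceAs (Mono (pushout.inl X.hom (T.map ι)))
  obtain ⟨r, hr⟩ := hX.exists_retraction u (inferInstanceAs (Mono (pushout.inr X.hom (T.map ι))))
    ((PreservesCokernel.iso T ι).hom ≫ cokernel.map _ _ _ _ sq.w)
    (by simp [u, ← Category.assoc, PreservesCokernel.π_iso_hom])
  exact (Retract.mk _ r.left (congrArg CommaMorphism.left hr)).injective

theorem monInjective_of_injective [T.Additive] {X : TriMod T} (hX : InMon T X)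
    [Injective X.left] [Injective X.right] : MonInjective T X := by
  refine ⟨hX, fun {Y Z} u g _ hZ ⟨⟨_, hl⟩, ⟨wr, hr⟩⟩ => ?_⟩
  have : Mono Z.hom := hZ
  have : Mono u.right := hr.mono_f
  let σ := hl.splittingOfInjective
  let j := T.map σ.s ≫ Y.hom
  have : Mono (j ≫ g.right) := by
    have : j ≫ g.right = Z.hom := by
      have hgw : Y.hom ≫ g.right = T.map g.left ≫ Z.hom := g.w.symm
      simp only [j, Category.assoc, hgw, ← Functor.map_comp_assoc]
      simp [σ.s_g]
    rwa [this]
  have := mono_biprod_desc_of_mono_comp u.right j g.right wr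
  let ρ := Injective.factorThru biprod.fst (biprod.desc u.right j)
  have hρ : biprod.desc u.right j ≫ ρ = biprod.fst := Injective.comp_factorThru _ _
  have hu : u.right ≫ ρ = 𝟙 _ := by simpa using biprod.inl ≫= hρ
  have hj : T.map σ.s ≫ Y.hom ≫ ρ = 0 := by simpa [j] using biprod.inr ≫= hρ
  have huw : T.map u.left ≫ Y.hom = X.hom ≫ u.right := u.w
  refine ⟨⟨σ.r, ρ, ?_⟩, Comma.hom_ext _ _ σ.f_r hu⟩
  calc T.map σ.r ≫ X.hom
      = T.map (σ.r ≫ u.left + g.left ≫ σ.s) ≫ Y.hom ≫ ρ := by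
        simp [reassoc_of% huw, hj, hu]
    _ = Y.hom ≫ ρ := by rw [σ.id, T.map_id, Category.id_comp]

theorem stmt_16_general [T.Additive] [PreservesFiniteColimits T]
    (hflat : ∀ {X Y : ModuleCat.{u} S} (f : X ⟶ Y), Mono f → Mono (T.map f))
    (X : TriMod T) (hX : InMon T X) :
    MonInjective T X ↔ (Injective X.right ∧ Injective X.left ∧ Mono X.hom) :=
  ⟨fun h => ⟨h.injective_right, h.injective_left hflat, hX⟩,
    fun ⟨_, _, _⟩ => monInjective_of_injective hX⟩

/-- Let `Λ = [[R, M], [0, S]]` where the bimodule `M` is flat as a right `S`-module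
(i.e. `T = M ⊗_S −` preserves monomorphisms) and `M ⊗_S E` is injective for every
injective `S`-module `E`.  Then an object `X = (X₁, X₂, φ)` of the monomorphism category
`Mon(Λ)` is injective in `Mon(Λ)` if and only if `X₁` is an injective `R`-module, `X₂`
is an injective `S`-module and `φ` is a monomorphism. -/
theorem stmt_16 [T.Additive] [PreservesFiniteColimits T]
    (hflat : ∀ {X Y : ModuleCat.{u} S} (f : X ⟶ Y), Mono f → Mono (T.map f))
    (hinj : ∀ E : ModuleCat.{u} S, Injective E → Injective (T.obj E))
    (X : TriMod T) (hX : InMon T X) :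
    MonInjective T X ↔ (Injective X.right ∧ Injective X.left ∧ Mono X.hom) :=
  stmt_16_general hflat X hX
end

section
/- Let R and S be rings, M an (R,S)-bimodule, Λ = [[R, M], [0, S]] the upper triangular matrix ring. A left Λ-module X = (X₁, X₂, φ), where φ : M ⊗_S X₂ → X₁, is projective if and only if X₂ is a projective S-module, coker φ is a projective R-module, and φ is a monomorphism; in this case X ≅ (M ⊗_S X₂, X₂, id) ⊕ (coker φ, 0, 0). -/
open CategoryTheory CategoryTheory.Limits

universe u

variable {R S : Type u} [Ring R] [Ring S]

variable (T : ModuleCat.{u} S ⥤ ModuleCat.{u} R)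

/-! A projective `X = (X₁, X₂, φ)` is a quotient of `(T X₂ ⊞ X₁, X₂, inl)`; a section of this
quotient map makes `φ` a split monomorphism, so `X ≅ (T X₂ ⊞ coker φ, X₂, inl)`.
Conversely, if `φ` is mono with projective cokernel, the cokernel sequence of `φ` splits and
gives the same decomposition, and `(T A ⊞ Q, A, inl)` is projective for projective `A`, `Q`:
lift the `A`-component first, then the `Q`-summand, and let `T` of the first lift fill the
`T A`-summand. Projectivity of `X₂` and `coker φ` is tested against triples with zero
structure map. -/

namespace CategoryTheory.Comma

variable {A B C : Type*} [Category A] [Category B] [Category C] {F : A ⥤ C} {G : B ⥤ C}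

lemma epi_of_epi_left_of_epi_right {X Y : Comma F G} (f : X ⟶ Y) [Epi f.left] [Epi f.right] :
    Epi f :=
  ⟨fun _ _ hgh => Comma.hom_ext _ _
    ((cancel_epi f.left).1 (congrArg CommaMorphism.left hgh))
    ((cancel_epi f.right).1 (congrArg CommaMorphism.right hgh))⟩

variable [HasPushouts A] [HasPushouts B] [PreservesColimitsOfShape WalkingSpan F]

instance epi_left_of_epi {X Y : Comma F G} (f : X ⟶ Y) [Epi f] : Epi f.left :=
  (Comma.fst F G).map_epi f

instance epi_right_of_epi {X Y : Comma F G} (f : X ⟶ Y) [Epi f] : Epi f.right :=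
  (Comma.snd F G).map_epi f

end CategoryTheory.Comma

namespace CategoryTheory.ShortComplex.Splitting

variable {C : Type*} [Category C] [Preadditive C] {S : ShortComplex C}

lemma f_comp_isoBinaryBiproduct_hom (s : S.Splitting) [HasBinaryBiproduct S.X₁ S.X₃] :
    S.f ≫ s.isoBinaryBiproduct.hom = biprod.inl := by
  ext <;> simp

end CategoryTheory.ShortComplex.Splitting

noncomputable section
variable {T}

namespace TriMod

abbrev splitObj (A : ModuleCat.{u} S) (Q : ModuleCat.{u} R) : TriMod T :=
  ⟨A, T.obj A ⊞ Q, biprod.inl⟩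

def isoSplitObj (X : TriMod T) (s : (ShortComplex.cokernelSequence X.hom).Splitting) :
    X ≅ splitObj X.left (cokernel X.hom) :=
  Comma.isoMk (Iso.refl _) s.isoBinaryBiproduct (by
    rw [Iso.refl_hom, T.map_id, Category.id_comp, Functor.id_map]
    exact s.f_comp_isoBinaryBiproduct_hom.symm)

lemma projective_left (X : TriMod T) [Projective X] : Projective X.left where
  factors {A B} u e _ := by
    let E : (⟨A, X.right, 0⟩ : TriMod T) ⟶ ⟨B, X.right, 0⟩ := ⟨e, 𝟙 _, by simp⟩
    have : Epi E := Comma.epi_of_epi_left_of_epi_right E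
    obtain ⟨L, hL⟩ := Projective.factors (⟨u, 0, by simp⟩ : X ⟶ ⟨B, X.right, 0⟩) E
    exact ⟨L.left, congrArg CommaMorphism.left hL⟩

lemma projective_cokernel_hom (X : TriMod T) [Projective X] : Projective (cokernel X.hom) where
  factors {A B} u e _ := by
    let E : (⟨X.left, A, 0⟩ : TriMod T) ⟶ ⟨X.left, B, 0⟩ := ⟨𝟙 _, e, by simp⟩
    have : Epi E := Comma.epi_of_epi_left_of_epi_right E
    obtain ⟨L, hL⟩ := Projective.factors
      (⟨𝟙 _, cokernel.π X.hom ≫ u, by simp⟩ : X ⟶ ⟨X.left, B, 0⟩) E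
    have hL0 : X.hom ≫ L.right = 0 := by simpa using L.w.symm
    refine ⟨cokernel.desc X.hom L.right hL0, ?_⟩
    rw [← cancel_epi (cokernel.π X.hom), cokernel.π_desc_assoc]
    exact congrArg CommaMorphism.right hL

instance isSplitMono_hom (X : TriMod T) [Projective X] : IsSplitMono X.hom := by
  let E : (splitObj X.left X.right : TriMod T) ⟶ X := ⟨𝟙 _, biprod.desc X.hom (𝟙 _), by simp⟩
  have : Epi E.right := epi_of_epi_fac (biprod.inr_desc X.hom (𝟙 _))
  have : Epi E := Comma.epi_of_epi_left_of_epi_right E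
  obtain ⟨s, hs⟩ := Projective.factors (𝟙 X) E
  have hs_left : s.left = 𝟙 _ := by simpa [E] using congrArg CommaMorphism.left hs
  refine ⟨⟨s.right ≫ biprod.fst, ?_⟩⟩
  simpa [hs_left] using congrArg (· ≫ biprod.fst) s.w.symm

def cokernelSequenceSplitting (X : TriMod T) [IsSplitMono X.hom] :
    (ShortComplex.cokernelSequence X.hom).Splitting :=
  .ofExactOfRetraction _ (ShortComplex.cokernelSequence_exact _)
    (retraction (hf := ‹_›)) (IsSplitMono.id (hf := ‹_›)) inferInstance

variable [PreservesFiniteColimits T]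

lemma projective_splitObj (A : ModuleCat.{u} S) (Q : ModuleCat.{u} R)
    [Projective A] [Projective Q] : Projective (splitObj A Q : TriMod T) where
  factors {E Z} u e _ := by
    obtain ⟨l, hl⟩ := Projective.factors u.left e.left
    obtain ⟨m, hm⟩ := Projective.factors (biprod.inr ≫ u.right) e.right
    refine ⟨⟨l, biprod.desc (T.map l ≫ E.hom) m, by simp⟩, Comma.hom_ext _ _ hl ?_⟩
    apply biprod.hom_ext'
    · rw [Comma.comp_right, biprod.inl_desc_assoc, Category.assoc]
      calc T.map l ≫ E.hom ≫ e.right = T.map l ≫ T.map e.left ≫ Z.hom := by rw [e.w]; rfl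
        _ = T.map u.left ≫ Z.hom := by rw [← T.map_comp_assoc, hl]
        _ = biprod.inl ≫ u.right := u.w
    · simpa using hm

lemma projective_of_mono_hom (X : TriMod T) [Projective X.left] [Projective (cokernel X.hom)]
    [Mono X.hom] : Projective X := by
  have hS : (ShortComplex.cokernelSequence X.hom).ShortExact :=
    .mk' (ShortComplex.cokernelSequence_exact _) ‹Mono X.hom› inferInstance
  have : Projective (ShortComplex.cokernelSequence X.hom).X₃ := ‹Projective (cokernel X.hom)›
  exact Projective.of_iso (isoSplitObj X hS.splittingOfProjective).symm (projective_splitObj _ _)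

end TriMod
end

theorem stmt_19 [PreservesFiniteColimits T] (X : TriMod T) :
    (Projective X ↔
      (Projective X.left ∧ Projective (cokernel X.hom) ∧ Mono X.hom)) ∧
    (Projective X →
      Nonempty (X ≅ ⟨X.left, T.obj X.left ⊞ cokernel X.hom, biprod.inl⟩)) :=
  ⟨⟨fun _ => ⟨TriMod.projective_left X, TriMod.projective_cokernel_hom X, inferInstance⟩,
    fun ⟨_, _, _⟩ => TriMod.projective_of_mono_hom X⟩,
   fun _ => ⟨TriMod.isoSplitObj X (TriMod.cokernelSequenceSplitting X)⟩⟩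
end
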